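/- arXiv:1505.06241 — 12 statements merged into one kernel-verified Lean document; each statement's English description precedes it below -/
import Mathlib

section
/- If G is an s×m matrix over F_2 with property A_k and u is a nonzero vector in F_2^s, then the Hamming weight of the codeword u·G is at least k. In other words, the minimum distance of a k-server PIR code is at least k. -/
/-- An `s × m` matrix `G` over `F_2` has property `A_k` if for every `i` there exist
`k` pairwise disjoint subsets of the columns of `G` such that the columns in each
subset sum to the standard basis vector `e_i`. -/
def hasPropertyA (s m k : ℕ) (G : Matrix (Fin s) (Fin m) (ZMod 2)) : Prop :=
  ∀ i : Fin s, ∃ R : Fin k → Finset (Fin m),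
    (∀ j j' : Fin k, j ≠ j' → Disjoint (R j) (R j')) ∧
    ∀ j : Fin k, ∀ r : Fin s, (∑ c ∈ R j, G r c) = if r = i then 1 else 0

/-- If `G` has property `A_k` and `u ≠ 0`, then the Hamming weight of the codeword
`u · G` is at least `k`: the minimum distance of a `k`-server PIR code is at least `k`. -/
theorem pir_min_distance (s m k : ℕ) (G : Matrix (Fin s) (Fin m) (ZMod 2))
    (hG : hasPropertyA s m k G) (u : Fin s → ZMod 2) (hu : u ≠ 0) :
    k ≤ (Finset.univ.filter fun c : Fin m => Matrix.vecMul u G c ≠ 0).card := by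
  obtain ⟨i, hi⟩ : ∃ i, u i ≠ 0 := by
    by_contra h
    push_neg at h
    exact hu (funext h)
  obtain ⟨R, hdisj, hsum⟩ := hG i
  have key : ∀ j : Fin k, ∃ c ∈ R j, Matrix.vecMul u G c ≠ 0 := by
    intro j
    by_contra h
    push_neg at h
    have : ∑ c ∈ R j, Matrix.vecMul u G c = 0 := Finset.sum_eq_zero h
    rw [show (∑ c ∈ R j, Matrix.vecMul u G c) = u i by
      simp only [Matrix.vecMul, dotProduct]
      rw [Finset.sum_comm]
      simp only [← Finset.mul_sum]
      rw [Finset.sum_congr rfl fun r _ => by rw [hsum j r]]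
      simp] at this
    exact hi this
  choose f hf hnz using key
  have hinj : Function.Injective f := by
    intro j j' h
    by_contra hne
    exact (Finset.disjoint_left.mp (hdisj j j' hne)) (h ▸ hf j) (hf j')
  calc k = (Finset.univ : Finset (Fin k)).card := by simp
    _ ≤ _ := Finset.card_le_card_of_injOn f
        (fun j _ => Finset.mem_filter.mpr ⟨Finset.mem_univ _, hnz j⟩)
        (fun a _ b _ h => hinj h)
end

section
/- For all integers s ≥ 1 and k ≥ 2, A(s,k) ≤ s + (k−1)·⌈s^{1/(k−1)}⌉^{k−2}, where ⌈s^{1/(k−1)}⌉ is the least integer σ with σ^{k−1} ≥ s. (This is achieved by the cubic construction, which arranges the s information bits in a (k−1)-dimensional cube of side σ and adds, for each of the k−1 axis directions, all σ^{k−2} parity sums along lines in that direction.) -/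
/-- `PIRlen s k` = `A(s,k)`: the smallest `m` such that an `s × m` matrix over `F_2`
with property `A_k` exists. -/
noncomputable def PIRlen (s k : ℕ) : ℕ :=
  sInf {m : ℕ | ∃ G : Matrix (Fin s) (Fin m) (ZMod 2), hasPropertyA s m k G}

/-!
Place the `s` information bits at distinct points of the cube `[σ]^(k-1)` and add, for every axis
direction, one parity column per line parallel to it. Over `F_2` the parity column of the line
through bit `i` in direction `d`, together with the other bits on that line, sums to `e_i`; with
the column `e_i` itself this gives `k` recovery sets. Two lines through the same point in
different directions meet only in that point, so these sets are pairwise disjoint.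
-/

open Finset Function

theorem Finset.disjoint_disjSum_disjSum {α β : Type*} {s s' : Finset α} {t t' : Finset β} :
    Disjoint (s.disjSum t) (s'.disjSum t') ↔ Disjoint s s' ∧ Disjoint t t' := by
  simp [disjoint_left, mem_disjSum]

theorem Fin.eq_of_removeNth_eq_of_removeNth_eq {n : ℕ} {α : Type*} {d d' : Fin (n + 1)}
    {f g : Fin (n + 1) → α} (hdd' : d ≠ d') (h : Fin.removeNth d f = Fin.removeNth d g)
    (h' : Fin.removeNth d' f = Fin.removeNth d' g) : f = g := by
  funext j
  by_cases hj : j = d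
  · obtain ⟨z, rfl⟩ := Fin.exists_succAbove_eq (hj ▸ hdd')
    exact congrFun h' z
  · obtain ⟨z, rfl⟩ := Fin.exists_succAbove_eq hj
    exact congrFun h z

section RecoveryFamily

variable {ρ ι κ : Type*} [DecidableEq ρ]

def IsRecoveryFamily (G : Matrix ρ ι (ZMod 2)) (i : ρ) (R : κ → Finset ι) : Prop :=
  Pairwise (Disjoint on R) ∧ ∀ j r, ∑ c ∈ R j, G r c = if r = i then 1 else 0

theorem IsRecoveryFamily.reindex {ι' κ' : Type*} {G : Matrix ρ ι (ZMod 2)} {i : ρ}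
    {R : κ → Finset ι} (hR : IsRecoveryFamily G i R) (eκ : κ ≃ κ') (eι : ι ≃ ι') :
    IsRecoveryFamily (G.submatrix id eι.symm) i (fun j => (R (eκ.symm j)).map eι.toEmbedding) :=
  ⟨fun _ _ hjj' => (disjoint_map _).2 (hR.1 (eκ.symm.injective.ne hjj')),
    fun j r => by simpa [sum_map] using hR.2 (eκ.symm j) r⟩

theorem hasPropertyA_iff {s m k : ℕ} (G : Matrix (Fin s) (Fin m) (ZMod 2)) :
    hasPropertyA s m k G ↔ ∀ i, ∃ R : Fin k → Finset (Fin m), IsRecoveryFamily G i R :=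
  Iff.rfl

end RecoveryFamily

section Cubic

variable {ι : Type*} [Fintype ι] [DecidableEq ι] {u σ : ℕ} (e : ι → Fin (u + 1) → Fin σ)

/-- The parity column `(d, x)` belongs to the line in direction `d` whose other coordinates
are `x`. -/
def cubicMatrix : Matrix ι (ι ⊕ Fin (u + 1) × (Fin u → Fin σ)) (ZMod 2) :=
  Matrix.fromCols 1 (Matrix.of fun r p => if Fin.removeNth p.1 (e r) = p.2 then 1 else 0)

def cubeLine (d : Fin (u + 1)) (i : ι) : Finset ι :=
  {j | Fin.removeNth d (e j) = Fin.removeNth d (e i)}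

def cubicRecoverySets (i : ι) :
    Option (Fin (u + 1)) → Finset (ι ⊕ Fin (u + 1) × (Fin u → Fin σ))
  | none => ({i} : Finset ι).disjSum ∅
  | some d => ((cubeLine e d i).erase i).disjSum {(d, Fin.removeNth d (e i))}

variable {e}

theorem cubeLine_erase_disjoint (he : Injective e) {d d' : Fin (u + 1)} (hdd' : d ≠ d')
    (i : ι) : Disjoint ((cubeLine e d i).erase i) ((cubeLine e d' i).erase i) := by
  simp only [disjoint_left, mem_erase, cubeLine, mem_filter, mem_univ, true_and]
  rintro j ⟨hji, hd⟩ ⟨-, hd'⟩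
  exact hji (he (Fin.eq_of_removeNth_eq_of_removeNth_eq hdd' hd hd'))

theorem pairwise_disjoint_cubicRecoverySets (he : Injective e) (i : ι) :
    Pairwise (Disjoint on cubicRecoverySets e i) := by
  rintro (_ | d) (_ | d') hdd'
  · exact absurd rfl hdd'
  · simp [onFun, cubicRecoverySets]
  · simp [onFun, cubicRecoverySets]
  · have hdd' : d ≠ d' := fun h => hdd' (congrArg some h)
    simp [onFun, cubicRecoverySets, disjoint_disjSum_disjSum, hdd',
      cubeLine_erase_disjoint he hdd' i]

theorem sum_cubicRecoverySets (i : ι) (j : Option (Fin (u + 1))) (r : ι) :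
    ∑ c ∈ cubicRecoverySets e i j, cubicMatrix e r c = if r = i then 1 else 0 := by
  cases j with
  | none => simp [cubicRecoverySets, cubicMatrix, Matrix.one_apply]
  | some d =>
    have hline : (Fin.removeNth d (e r) = Fin.removeNth d (e i)) ↔ r ∈ cubeLine e d i := by
      simp [cubeLine]
    simp only [cubicRecoverySets, sum_disjSum, cubicMatrix, Matrix.fromCols_apply_inl,
      Matrix.fromCols_apply_inr, Matrix.one_apply, sum_ite_eq, sum_singleton, Matrix.of_apply,
      hline, mem_erase]
    by_cases hri : r = i
    · simp [hri, cubeLine]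
    · by_cases hr : r ∈ cubeLine e d i <;> simp [hri, hr, CharTwo.add_self_eq_zero]

theorem isRecoveryFamily_cubicRecoverySets (he : Injective e) (i : ι) :
    IsRecoveryFamily (cubicMatrix e) i (cubicRecoverySets e i) :=
  ⟨pairwise_disjoint_cubicRecoverySets he i, sum_cubicRecoverySets i⟩

end Cubic

theorem exists_hasPropertyA_of_le_pow {s u σ : ℕ} (hle : s ≤ σ ^ (u + 1)) :
    ∃ G : Matrix (Fin s) (Fin (s + (u + 1) * σ ^ u)) (ZMod 2),
      hasPropertyA s (s + (u + 1) * σ ^ u) (u + 2) G := by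
  let e : Fin s → Fin (u + 1) → Fin σ := finFunctionFinEquiv.symm ∘ Fin.castLE hle
  have he : Injective e :=
    finFunctionFinEquiv.symm.injective.comp (Fin.castLE_injective hle)
  let eι : Fin s ⊕ Fin (u + 1) × (Fin u → Fin σ) ≃ Fin (s + (u + 1) * σ ^ u) :=
    Fintype.equivFinOfCardEq (by simp)
  exact ⟨_, (hasPropertyA_iff _).2 fun i =>
    ⟨_, (isRecoveryFamily_cubicRecoverySets he i).reindex (finSuccEquiv (u + 1)).symm eι⟩⟩

theorem PIRlen_le {s m k : ℕ} {G : Matrix (Fin s) (Fin m) (ZMod 2)} (hG : hasPropertyA s m k G) :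
    PIRlen s k ≤ m :=
  Nat.sInf_le ⟨G, hG⟩

theorem pir_cubic_general (s k : ℕ) (hk : 2 ≤ k) :
    PIRlen s k ≤ s + (k - 1) * (sInf {σ : ℕ | s ≤ σ ^ (k - 1)}) ^ (k - 2) := by
  obtain ⟨u, rfl⟩ : ∃ u, k = u + 2 := ⟨k - 2, by omega⟩
  have hσ : s ≤ sInf {σ : ℕ | s ≤ σ ^ (u + 1)} ^ (u + 1) :=
    Nat.sInf_mem (s := {σ : ℕ | s ≤ σ ^ (u + 1)}) ⟨s, Nat.le_self_pow (Nat.succ_ne_zero u) s⟩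
  obtain ⟨G, hG⟩ := exists_hasPropertyA_of_le_pow hσ
  exact PIRlen_le hG

/-- The cubic construction: `A(s,k) ≤ s + (k−1)·σ^{k−2}` where `σ = ⌈s^{1/(k−1)}⌉`
is the least integer with `σ^{k−1} ≥ s`. -/
theorem pir_cubic (s k : ℕ) (hs : 1 ≤ s) (hk : 2 ≤ k) :
    PIRlen s k ≤ s + (k - 1) * (sInf {σ : ℕ | s ≤ σ ^ (k - 1)}) ^ (k - 2) :=
  pir_cubic_general s k hk
end

section
/- Let S_1, ..., S_r be subsets of {1,...,s} such that (1) every element i in {1,...,s} belongs to at least k−1 of the subsets, and (2) |S_j ∩ S_ℓ| ≤ 1 for all j ≠ ℓ. Then the s×(s+r) matrix [I_s | M], where I_s is the s×s identity matrix and M is the s×r matrix with M_{ij} = 1 if and only if i ∈ S_j, has property A_k. In particular, A(s,k) ≤ s + r. -/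
/-- If `S_1, …, S_r ⊆ {1,…,s}` are such that every `i` belongs to at least `k−1`
of the subsets and `|S_j ∩ S_ℓ| ≤ 1` for `j ≠ ℓ`, then the systematic matrix
`[I_s | M]` (with `M_{ij} = 1` iff `i ∈ S_j`) has property `A_k`; in particular
`A(s,k) ≤ s + r`. -/
theorem pir_systematic_from_subsets (s r k : ℕ) (S : Fin r → Finset (Fin s))
    (h1 : ∀ i : Fin s, k - 1 ≤ (Finset.univ.filter fun j : Fin r => i ∈ S j).card)
    (h2 : ∀ j ℓ : Fin r, j ≠ ℓ → (S j ∩ S ℓ).card ≤ 1) :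
    hasPropertyA s (s + r) k
      (fun i c =>
        if h : (c : ℕ) < s then (if (i : ℕ) = (c : ℕ) then 1 else 0)
        else (if i ∈ S ⟨(c : ℕ) - s, by have := c.isLt; omega⟩ then 1 else 0)) ∧
    PIRlen s k ≤ s + r := by
  have hA : hasPropertyA s (s + r) k
      (fun i c =>
        if h : (c : ℕ) < s then (if (i : ℕ) = (c : ℕ) then 1 else 0)
        else (if i ∈ S ⟨(c : ℕ) - s, by have := c.isLt; omega⟩ then 1 else 0)) := by
    intro i
    obtain ⟨T, hTsub, hTcard⟩ := Finset.exists_subset_card_eq (h1 i)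
    set pick : Fin (k-1) → Fin r := fun t => T.orderEmbOfFin hTcard t with hpickdef
    have hpicki : ∀ t, i ∈ S (pick t) := by
      intro t
      have hm : pick t ∈ T := T.orderEmbOfFin_mem hTcard t
      have := hTsub hm
      simpa using this
    have hpickinj : Function.Injective pick := (T.orderEmbOfFin hTcard).injective
    refine ⟨fun j => if h : (j : ℕ) = 0 then {Fin.castAdd r i}
      else {Fin.natAdd s (pick ⟨(j:ℕ)-1, by have := j.isLt; omega⟩)} ∪
        ((S (pick ⟨(j:ℕ)-1, by have := j.isLt; omega⟩)).erase i).image (Fin.castAdd r),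
      ?_, ?_⟩
    · intro j j' hjj'
      dsimp only
      by_cases hj : (j:ℕ) = 0 <;> by_cases hj' : (j':ℕ) = 0
      · exact absurd (Fin.ext (hj.trans hj'.symm)) hjj'
      · rw [dif_pos hj, dif_neg hj']
        rw [Finset.disjoint_left]
        intro c hc hc'
        simp only [Finset.mem_singleton] at hc
        simp only [Finset.mem_union, Finset.mem_singleton, Finset.mem_image,
          Finset.mem_erase] at hc'
        rcases hc' with h' | ⟨x, ⟨hxne, hxS⟩, hx⟩
        · have e1 : (c : ℕ) < s := by rw [hc]; simp [i.isLt]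
          have e2 : s ≤ (c : ℕ) := by rw [h']; simp
          omega
        · have : x = i := by
            have := congrArg Fin.val (hx.trans hc)
            simp at this
            exact Fin.ext this
          exact hxne this
      · rw [dif_neg hj, dif_pos hj']
        rw [Finset.disjoint_left]
        intro c hc hc'
        simp only [Finset.mem_singleton] at hc'
        simp only [Finset.mem_union, Finset.mem_singleton, Finset.mem_image,
          Finset.mem_erase] at hc
        rcases hc with h' | ⟨x, ⟨hxne, hxS⟩, hx⟩
        · have e1 : (c : ℕ) < s := by rw [hc']; simp [i.isLt]
          have e2 : s ≤ (c : ℕ) := by rw [h']; simp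
          omega
        · have : x = i := by
            have := congrArg Fin.val (hx.trans hc')
            simp at this
            exact Fin.ext this
          exact hxne this
      · rw [dif_neg hj, dif_neg hj']
        set t := pick ⟨(j:ℕ)-1, by have := j.isLt; omega⟩ with ht
        set t' := pick ⟨(j':ℕ)-1, by have := j'.isLt; omega⟩ with ht'
        have htt' : t ≠ t' := by
          intro h
          have hv : (j:ℕ)-1 = (j':ℕ)-1 := congrArg Fin.val (hpickinj h)
          exact hjj' (Fin.ext (by omega))
        rw [Finset.disjoint_left]
        intro c hc hc'
        simp only [Finset.mem_union, Finset.mem_singleton, Finset.mem_image,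
          Finset.mem_erase] at hc hc'
        rcases hc with h1' | ⟨x, ⟨hxne, hxS⟩, hx⟩ <;>
          rcases hc' with h2' | ⟨y, ⟨hyne, hyS⟩, hy⟩
        · refine htt' ?_
          have := congrArg Fin.val (h1'.symm.trans h2')
          simp at this
          exact Fin.ext this
        · have e1 : s ≤ (c:ℕ) := by rw [h1']; simp
          have e2 : (c:ℕ) < s := by rw [← hy]; simp [y.isLt]
          omega
        · have e1 : s ≤ (c:ℕ) := by rw [h2']; simp
          have e2 : (c:ℕ) < s := by rw [← hx]; simp [x.isLt]
          omega
        · have hxy : x = y := by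
            have := congrArg Fin.val (hx.trans hy.symm)
            simp at this
            exact Fin.ext this
          subst hxy
          have hsub : ({x, i} : Finset (Fin s)) ⊆ S t ∩ S t' := by
            intro z hz
            simp only [Finset.mem_insert, Finset.mem_singleton] at hz
            rcases hz with rfl | rfl
            · exact Finset.mem_inter.mpr ⟨hxS, hyS⟩
            · exact Finset.mem_inter.mpr ⟨hpicki _, hpicki _⟩
          have hcard2 : ({x, i} : Finset (Fin s)).card = 2 := by
            rw [Finset.card_insert_of_notMem (by simpa using hxne), Finset.card_singleton]
          have := Finset.card_le_card hsub
          have := h2 t t' htt'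
          omega
    · intro j rr
      dsimp only
      by_cases hj : (j:ℕ) = 0
      · rw [dif_pos hj, Finset.sum_singleton]
        simp only [Fin.coe_castAdd, i.isLt, dif_pos]
        by_cases hri : rr = i
        · simp [hri]
        · rw [if_neg hri, if_neg (by exact fun h => hri (Fin.ext h))]
      · rw [dif_neg hj]
        set t := pick ⟨(j:ℕ)-1, by have := j.isLt; omega⟩ with ht
        have hdisj : Disjoint ({Fin.natAdd s t} : Finset (Fin (s+r)))
            (((S t).erase i).image (Fin.castAdd r)) := by
          rw [Finset.disjoint_left]
          intro c hc hc'
          simp only [Finset.mem_singleton] at hc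
          simp only [Finset.mem_image, Finset.mem_erase] at hc'
          obtain ⟨x, _, hx⟩ := hc'
          have := congrArg Fin.val (hx.trans hc)
          simp at this
          omega
        rw [Finset.sum_union hdisj, Finset.sum_singleton,
          Finset.sum_image (fun a _ b _ h => Fin.castAdd_injective _ _ h)]
        rw [dif_neg (show ¬((Fin.natAdd s t : Fin (s+r)):ℕ) < s by simp)]
        simp only [Fin.coe_natAdd, Fin.coe_castAdd, add_tsub_cancel_left, Fin.eta,
          Fin.is_lt, dif_pos, Fin.val_eq_val]
        rw [Finset.sum_ite_eq]
        by_cases hri : rr = i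
        · subst hri
          rw [if_pos (hpicki _), if_neg (by simp), if_pos rfl, add_zero]
        · rw [if_neg hri]
          by_cases hrS : rr ∈ S t
          · rw [if_pos hrS, if_pos (Finset.mem_erase.mpr ⟨hri, hrS⟩)]
            decide
          · rw [if_neg hrS, if_neg (fun h => hrS (Finset.mem_of_mem_erase h))]
            simp
  exact ⟨hA, Nat.sInf_le ⟨_, hA⟩⟩
end

section
/- Let k ≥ 2 and s be integers with (k−1) dividing (s−1), and suppose there exists a Steiner system S(2, (s−1)/(k−1) + 1, s). Then (s+k−2) divides s(k−1)^2, and A(s,k) ≤ s + s(k−1)^2/(s+k−2). (The blocks of the Steiner system are used as the parity sets of a systematic k-server PIR code; the number of blocks equals s(k−1)^2/(s+k−2) and every element lies in exactly k−1 blocks.) -/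
/-- A Steiner system `S(2, ℓ, n)`: a collection of `ℓ`-element blocks of an `n`-element
set such that every 2-element subset is contained in exactly one block. -/
def IsSteinerSystem (ℓ n : ℕ) (B : Finset (Finset (Fin n))) : Prop :=
  (∀ b ∈ B, b.card = ℓ) ∧
  ∀ p : Finset (Fin n), p.card = 2 → ∃! b, b ∈ B ∧ p ⊆ b

open Finset Function

section RecoverySets

variable {σ ι : Type*} [DecidableEq σ]

def IsRecoverySet (G : Matrix σ ι (ZMod 2)) (i : σ) (R : Finset ι) : Prop :=
  ∀ r, ∑ c ∈ R, G r c = if r = i then 1 else 0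

theorem PIRlen_le_card {s k : ℕ} [Fintype ι] (G : Matrix (Fin s) ι (ZMod 2))
    (hG : ∀ i, ∃ R : Fin k → Finset ι, Pairwise (Disjoint on R) ∧ ∀ j, IsRecoverySet G i (R j)) :
    PIRlen s k ≤ Fintype.card ι := by
  let e := Fintype.equivFin ι
  refine Nat.sInf_le ⟨G.submatrix id e.symm, fun i => ?_⟩
  obtain ⟨R, hdisj, hrec⟩ := hG i
  refine ⟨fun j => (R j).map e.toEmbedding, fun j j' hne => ?_, fun j r => ?_⟩
  · exact (disjoint_map _).2 (hdisj hne)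
  · simpa [sum_map] using hrec j r

theorem exists_fin_recoverySets {κ : Type*} [Fintype κ] {G : Matrix σ ι (ZMod 2)} {i : σ}
    {k : ℕ} (hk : k ≤ Fintype.card κ) {R : κ → Finset ι} (hdisj : Pairwise (Disjoint on R))
    (hrec : ∀ j, IsRecoverySet G i (R j)) :
    ∃ R' : Fin k → Finset ι, Pairwise (Disjoint on R') ∧ ∀ j, IsRecoverySet G i (R' j) := by
  obtain ⟨f⟩ : Nonempty (Fin k ↪ κ) := Embedding.nonempty_of_card_le (by simpa using hk)
  exact ⟨R ∘ f, fun j j' hne => hdisj (f.injective.ne hne), fun j => hrec (f j)⟩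

theorem PIRlen_one_le (k : ℕ) : PIRlen 1 k ≤ k := by
  simpa using PIRlen_le_card (Matrix.of fun (_ : Fin 1) (_ : Fin k) => (1 : ZMod 2)) fun i =>
    ⟨fun j => {j}, fun _ _ hne => disjoint_singleton.2 hne,
      fun j r => by simp [Subsingleton.elim r i]⟩

end RecoverySets

theorem Finset.disjoint_disjSum_disjSum_s4 {α β : Type*} {s₁ s₂ : Finset α} {t₁ t₂ : Finset β}
    (hs : Disjoint s₁ s₂) (ht : Disjoint t₁ t₂) : Disjoint (s₁.disjSum t₁) (s₂.disjSum t₂) := by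
  simp only [disjoint_left, Sum.forall, inl_mem_disjSum, inr_mem_disjSum] at hs ht ⊢
  exact ⟨hs, ht⟩

section SystematicCode

variable {σ : Type*} [DecidableEq σ] (B : Finset (Finset σ))

def incidenceMatrix : Matrix σ B (ZMod 2) :=
  Matrix.of fun x b => if x ∈ (b : Finset σ) then 1 else 0

def systematicMatrix : Matrix σ (σ ⊕ B) (ZMod 2) :=
  Matrix.fromCols 1 (incidenceMatrix B)

def blockRecoverySet (i : σ) (b : B) : Finset (σ ⊕ B) :=
  ((b : Finset σ).erase i).disjSum {b}

theorem isRecoverySet_singleton (i : σ) : IsRecoverySet (systematicMatrix B) i {Sum.inl i} := by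
  intro r
  simp [systematicMatrix, Matrix.one_apply]

theorem isRecoverySet_blockRecoverySet {i : σ} {b : B} (hi : i ∈ (b : Finset σ)) :
    IsRecoverySet (systematicMatrix B) i (blockRecoverySet B i b) := by
  intro r
  simp only [blockRecoverySet, systematicMatrix, incidenceMatrix, sum_disjSum,
    Matrix.fromCols_apply_inl, Matrix.fromCols_apply_inr, Matrix.one_apply, sum_ite_eq,
    sum_singleton, Matrix.of_apply, mem_erase]
  by_cases hri : r = i
  · simp [hri, hi]
  by_cases hrb : r ∈ (b : Finset σ)
  · simp only [hrb, hri, ne_eq, not_false_eq_true, and_self, if_true, if_false]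
    decide
  · simp [hri, hrb]

theorem disjoint_singleton_blockRecoverySet (i : σ) (b : B) :
    Disjoint {Sum.inl i} (blockRecoverySet B i b) := by
  simp [blockRecoverySet]

theorem disjoint_blockRecoverySet (hB : (B : Set (Finset σ)).Pairwise fun b b' => #(b ∩ b') ≤ 1)
    {i : σ} {b b' : B} (hb : i ∈ (b : Finset σ)) (hb' : i ∈ (b' : Finset σ)) (hne : b ≠ b') :
    Disjoint (blockRecoverySet B i b) (blockRecoverySet B i b') := by
  refine disjoint_disjSum_disjSum_s4 ?_ (disjoint_singleton.2 hne)
  rw [disjoint_left]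
  intro x hx hx'
  rw [mem_erase] at hx hx'
  refine (hB b.2 b'.2 (Subtype.coe_injective.ne hne)).not_gt (one_lt_card.2 ?_)
  exact ⟨x, mem_inter.2 ⟨hx.2, hx'.2⟩, i, mem_inter.2 ⟨hb, hb'⟩, hx.1⟩

theorem PIRlen_le_add_card {s k : ℕ} {B : Finset (Finset (Fin s))}
    (hB : (B : Set (Finset (Fin s))).Pairwise fun b b' => #(b ∩ b') ≤ 1)
    (hk : ∀ i, k ≤ #{b ∈ B | i ∈ b} + 1) : PIRlen s k ≤ s + #B := by
  refine (PIRlen_le_card (systematicMatrix B) fun i => ?_).trans (by simp)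
  let R : Option {b ∈ B | i ∈ b} → Finset (Fin s ⊕ B) := fun o =>
    o.elim {Sum.inl i} fun b => blockRecoverySet B i ⟨b, (mem_filter.1 b.2).1⟩
  have hcard : k ≤ Fintype.card (Option {b ∈ B | i ∈ b}) := by
    rw [Fintype.card_option, Fintype.card_coe]
    exact hk i
  refine exists_fin_recoverySets (R := R) hcard ?_ ?_
  · rintro (_ | b) (_ | b') hne
    · exact absurd rfl hne
    · exact disjoint_singleton_blockRecoverySet B i _
    · exact (disjoint_singleton_blockRecoverySet B i _).symm
    · refine disjoint_blockRecoverySet B hB (mem_filter.1 b.2).2 (mem_filter.1 b'.2).2 ?_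
      intro h
      exact hne (congrArg some (Subtype.ext (congrArg Subtype.val h :)))
  · rintro (_ | b)
    · exact isRecoverySet_singleton B i
    · exact isRecoverySet_blockRecoverySet B (mem_filter.1 b.2).2

end SystematicCode

namespace IsSteinerSystem

variable {ℓ n : ℕ} {B : Finset (Finset (Fin n))}

theorem exists_mem_of_ne (hB : IsSteinerSystem ℓ n B) {x y : Fin n} (hxy : x ≠ y) :
    ∃ b ∈ B, x ∈ b ∧ y ∈ b := by
  obtain ⟨b, ⟨hb, hxyb⟩, -⟩ := hB.2 {x, y} (card_pair hxy)
  exact ⟨b, hb, hxyb (mem_insert_self x _), hxyb (mem_insert_of_mem (mem_singleton_self y))⟩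

theorem eq_of_mem_of_mem (hB : IsSteinerSystem ℓ n B) {x y : Fin n} (hxy : x ≠ y)
    {b b' : Finset (Fin n)} (hb : b ∈ B) (hb' : b' ∈ B) (hx : x ∈ b) (hy : y ∈ b)
    (hx' : x ∈ b') (hy' : y ∈ b') : b = b' :=
  (hB.2 {x, y} (card_pair hxy)).unique ⟨hb, insert_subset hx (singleton_subset_iff.2 hy)⟩
    ⟨hb', insert_subset hx' (singleton_subset_iff.2 hy')⟩

theorem pairwise_card_inter_le_one (hB : IsSteinerSystem ℓ n B) :
    (B : Set (Finset (Fin n))).Pairwise fun b b' => #(b ∩ b') ≤ 1 := by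
  intro b hb b' hb' hne
  by_contra! h
  obtain ⟨x, hx, y, hy, hxy⟩ := one_lt_card.1 h
  rw [mem_inter] at hx hy
  exact hne (hB.eq_of_mem_of_mem hxy hb hb' hx.1 hy.1 hx.2 hy.2)

-- The blocks through `x`, with `x` removed, partition the other points.
theorem card_filter_mem_mul (hB : IsSteinerSystem ℓ n B) (x : Fin n) :
    #{b ∈ B | x ∈ b} * (ℓ - 1) = n - 1 := by
  have hcover : {b ∈ B | x ∈ b}.biUnion (fun b => b.erase x) = univ.erase x := by
    ext y
    simp only [mem_biUnion, mem_filter, mem_erase, mem_univ, and_true]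
    refine ⟨fun ⟨_, _, hyx, _⟩ => hyx, fun hyx => ?_⟩
    obtain ⟨b, hb, hxb, hyb⟩ := hB.exists_mem_of_ne (Ne.symm hyx)
    exact ⟨b, ⟨hb, hxb⟩, hyx, hyb⟩
  have hdisj : (({b ∈ B | x ∈ b} : Finset _) : Set (Finset (Fin n))).PairwiseDisjoint
      (fun b => b.erase x) := by
    intro b hb b' hb' hne
    rw [mem_coe, mem_filter] at hb hb'
    refine disjoint_left.2 fun y hy hy' => hne ?_
    rw [mem_erase] at hy hy'
    exact hB.eq_of_mem_of_mem hy.1 hb.1 hb'.1 hy.2 hb.2 hy'.2 hb'.2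
  calc #{b ∈ B | x ∈ b} * (ℓ - 1) = ∑ b ∈ {b ∈ B | x ∈ b}, #(b.erase x) := by
        rw [sum_const_nat]
        intro b hb
        rw [mem_filter] at hb
        rw [card_erase_of_mem hb.2, hB.1 b hb.1]
    _ = n - 1 := by rw [← card_biUnion hdisj, hcover, card_erase_of_mem (mem_univ x), card_fin]

end IsSteinerSystem

/-- If `k ≥ 2`, `(k−1) ∣ (s−1)` and a Steiner system `S(2, (s−1)/(k−1) + 1, s)` exists,
then `(s+k−2) ∣ s(k−1)²` and `A(s,k) ≤ s + s(k−1)²/(s+k−2)`. -/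
theorem pir_steiner_columns (s k : ℕ) (hk : 2 ≤ k) (hdvd : (k - 1) ∣ (s - 1))
    (hex : ∃ B : Finset (Finset (Fin s)), IsSteinerSystem ((s - 1) / (k - 1) + 1) s B) :
    (s + k - 2) ∣ s * (k - 1) ^ 2 ∧
    PIRlen s k ≤ s + s * (k - 1) ^ 2 / (s + k - 2) := by
  obtain ⟨B, hB⟩ := hex
  obtain rfl | rfl | hs := show s = 0 ∨ s = 1 ∨ 2 ≤ s by omega
  · simpa using PIRlen_le_card (ι := Fin 0) 0 finZeroElim
  · -- The blocks are singletons, so the repetition code takes their place.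
    have h : 1 + k - 2 = k - 1 := by omega
    rw [h, one_mul, sq, Nat.mul_div_cancel _ (by omega)]
    exact ⟨dvd_mul_right _ _, by simpa [h, show 1 + (k - 1) = k by omega] using PIRlen_one_le k⟩
  obtain ⟨d, hd⟩ := hdvd
  have hd0 : 0 < d := Nat.pos_of_ne_zero fun h => by simp [h] at hd; omega
  rw [hd, Nat.mul_div_cancel_left _ (by omega)] at hB
  have hrep : ∀ x, #{b ∈ B | x ∈ b} = k - 1 := fun x =>
    Nat.eq_of_mul_eq_mul_right hd0 (by simpa [hd, mul_comm] using hB.card_filter_mem_mul x)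
  have hcount : #B * (d + 1) = s * (k - 1) := by
    rw [← sum_const_nat fun b hb => hB.1 b hb, sum_card hrep, Fintype.card_fin]
  have hkey : s * (k - 1) ^ 2 = (s + k - 2) * #B := by
    calc s * (k - 1) ^ 2 = #B * (d + 1) * (k - 1) := by rw [hcount, sq, mul_assoc]
      _ = ((k - 1) * d + (k - 1)) * #B := by ring
      _ = (s + k - 2) * #B := by congr 1; omega
  refine ⟨Dvd.intro _ hkey.symm, ?_⟩
  rw [hkey, Nat.mul_div_cancel_left _ (by omega)]
  exact PIRlen_le_add_card hB.pairwise_card_inter_le_one fun i => by rw [hrep i]; omega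
end

section
/- Let k ≥ 3 and r be integers and suppose there exists a Steiner system S(2, k−1, r). Then (k−1)(k−2) divides r(r−1), and A( r(r−1)/((k−1)(k−2)), k ) ≤ r + r(r−1)/((k−1)(k−2)). That is, there exists a k-server PIR code with r(r−1)/((k−1)(k−2)) information bits and only r redundancy bits. -/
lemma two_mul_choose_two (n : ℕ) : 2 * n.choose 2 = n * (n - 1) := by
  have hev : 2 ∣ n * (n - 1) := by
    rcases n with _ | m
    · simp
    · simpa [Nat.mul_comm] using (Nat.even_mul_succ_self m).two_dvd
  rw [Nat.choose_two_right, Nat.mul_div_cancel' hev]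

lemma steiner_count (ℓ r : ℕ) (B : Finset (Finset (Fin r)))
    (hB : IsSteinerSystem ℓ r B) : B.card * (ℓ * (ℓ - 1)) = r * (r - 1) := by
  classical
  obtain ⟨hcard, huniq⟩ := hB
  have key : (Finset.univ : Finset (Fin r)).powersetCard 2
      = B.biUnion (fun b => b.powersetCard 2) := by
    ext p
    simp only [Finset.mem_powersetCard, Finset.mem_biUnion]
    constructor
    · rintro ⟨-, hp2⟩
      obtain ⟨b, ⟨hbB, hpb⟩, -⟩ := huniq p hp2
      exact ⟨b, hbB, hpb, hp2⟩
    · rintro ⟨b, _, _, hp2⟩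
      exact ⟨Finset.subset_univ p, hp2⟩
  have hdisj : ∀ b ∈ B, ∀ b' ∈ B, b ≠ b' →
      Disjoint (b.powersetCard 2) (b'.powersetCard 2) := by
    intro b hb b' hb' hne
    rw [Finset.disjoint_left]
    intro p hp hp'
    rw [Finset.mem_powersetCard] at hp hp'
    obtain ⟨c, -, hcu⟩ := huniq p hp.2
    exact hne ((hcu b ⟨hb, hp.1⟩).trans (hcu b' ⟨hb', hp'.1⟩).symm)
  have h1 : r.choose 2 = B.card * ℓ.choose 2 := by
    have := congrArg Finset.card key
    rw [Finset.card_powersetCard, Finset.card_biUnion hdisj] at this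
    simp only [Finset.card_univ, Fintype.card_fin] at this
    rw [this, Finset.sum_congr rfl (fun b hb => by
      rw [Finset.card_powersetCard, hcard b hb]), Finset.sum_const, smul_eq_mul]
  calc B.card * (ℓ * (ℓ - 1)) = B.card * (2 * ℓ.choose 2) := by rw [two_mul_choose_two]
    _ = 2 * (B.card * ℓ.choose 2) := by ring
    _ = 2 * r.choose 2 := by rw [h1]
    _ = r * (r - 1) := two_mul_choose_two r

lemma steiner_construction (ℓ r : ℕ) (B : Finset (Finset (Fin r)))
    (hB : IsSteinerSystem ℓ r B) :
    ∃ G : Matrix (Fin B.card) (Fin (r + B.card)) (ZMod 2),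
      hasPropertyA B.card (r + B.card) (ℓ + 1) G := by
  classical
  obtain ⟨hcard, huniq⟩ := hB
  set s := B.card with hs
  let e : Fin s ≃ {x // x ∈ B} := B.equivFin.symm
  refine ⟨fun i => Fin.addCases (fun p => if p ∈ (e i : Finset (Fin r)) then 1 else 0)
      (fun j => if j = i then 1 else 0), ?_⟩
  intro i
  have hbcard : ((e i : Finset (Fin r))).card = ℓ := hcard _ (e i).2
  let pt : Fin ℓ → Fin r := fun j => (e i : Finset (Fin r)).orderIsoOfFin hbcard j
  have hpt_mem : ∀ j, pt j ∈ (e i : Finset (Fin r)) :=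
    fun j => ((e i : Finset (Fin r)).orderIsoOfFin hbcard j).2
  have hpt_inj : Function.Injective pt := by
    intro a b hab
    exact ((e i : Finset (Fin r)).orderIsoOfFin hbcard).injective (Subtype.ext hab)
  -- recovery set from a point p of the block
  let S : Fin r → Finset (Fin (r + s)) := fun p =>
    insert (Fin.castAdd s p)
      ((Finset.univ.filter (fun i' : Fin s =>
        p ∈ (e i' : Finset (Fin r)) ∧ i' ≠ i)).image (Fin.natAdd r))
  let R : Fin (ℓ + 1) → Finset (Fin (r + s)) := fun j =>
    if h : (j : ℕ) = 0 then {Fin.natAdd r i}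
    else S (pt ⟨(j : ℕ) - 1, by have := j.isLt; omega⟩)
  -- basic facts
  have hne_cast_nat : ∀ (p : Fin r) (j : Fin s), Fin.castAdd s p ≠ Fin.natAdd r j := by
    intro p j h
    have := congrArg Fin.val h
    simp [Fin.castAdd, Fin.natAdd] at this
    omega
  have natAdd_inj : ∀ (a b : Fin s), Fin.natAdd r a = Fin.natAdd r b → a = b := by
    intro a b h
    have := congrArg Fin.val h
    simp [Fin.natAdd] at this
    exact Fin.ext this
  have hnotmem : ∀ p F, Fin.castAdd s p ∉ (F : Finset (Fin s)).image (Fin.natAdd r) := by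
    intro p F hmem
    obtain ⟨j, -, hj⟩ := Finset.mem_image.mp hmem
    exact hne_cast_nat p j hj.symm
  -- disjointness of point sets for distinct points of the block
  have hSdisj : ∀ p q, p ∈ (e i : Finset (Fin r)) → q ∈ (e i : Finset (Fin r)) →
      p ≠ q → Disjoint (S p) (S q) := by
    intro p q hp hq hpq
    rw [Finset.disjoint_left]
    intro x hx hx'
    simp only [S, Finset.mem_insert, Finset.mem_image, Finset.mem_filter] at hx hx'
    rcases hx with hx | ⟨i1, ⟨-, hi1p, hi1ne⟩, rfl⟩
    · rcases hx' with hx' | ⟨i2, ⟨-, hi2q, -⟩, hx'⟩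
      · exact hpq (Fin.castAdd_injective _ _ (hx.symm.trans hx'))
      · exact hne_cast_nat p i2 (hx.symm.trans hx'.symm)
    · rcases hx' with hx' | ⟨i2, ⟨-, hi2q, -⟩, hx'⟩
      · exact hne_cast_nat q i1 hx'.symm
      · have : i2 = i1 := natAdd_inj _ _ hx'
        subst this
        -- block e i1 contains both p and q, as does e i; uniqueness forces i1 = i
        have hpair : ({p, q} : Finset (Fin r)).card = 2 := Finset.card_pair hpq
        obtain ⟨c, -, hcu⟩ := huniq {p, q} hpair
        have h1 : (e i2 : Finset (Fin r)) = c := hcu _ ⟨(e i2).2, by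
          intro x hx; rcases Finset.mem_insert.mp hx with rfl | hx
          · exact hi1p
          · rcases Finset.mem_singleton.mp hx with rfl; exact hi2q⟩
        have h2 : (e i : Finset (Fin r)) = c := hcu _ ⟨(e i).2, by
          intro x hx; rcases Finset.mem_insert.mp hx with rfl | hx
          · exact hp
          · rcases Finset.mem_singleton.mp hx with rfl; exact hq⟩
        exact hi1ne (e.injective (Subtype.ext (h1.trans h2.symm)))
  refine ⟨R, ?_, ?_⟩
  · -- pairwise disjointness of the R j
    intro j j' hjj'
    by_cases h0 : (j : ℕ) = 0 <;> by_cases h0' : (j' : ℕ) = 0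
    · exact absurd (Fin.ext (h0.trans h0'.symm)) hjj'
    · simp only [R, dif_pos h0, dif_neg h0']
      rw [Finset.disjoint_left]
      intro x hx hx'
      rw [Finset.mem_singleton] at hx
      subst hx
      simp only [S, Finset.mem_insert, Finset.mem_image, Finset.mem_filter] at hx'
      rcases hx' with hx' | ⟨i1, ⟨-, -, hi1ne⟩, hx'⟩
      · exact hne_cast_nat _ i hx'.symm
      · exact hi1ne (natAdd_inj _ _ hx')
    · simp only [R, dif_neg h0, dif_pos h0']
      rw [Finset.disjoint_right]
      intro x hx hx'
      rw [Finset.mem_singleton] at hx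
      subst hx
      simp only [S, Finset.mem_insert, Finset.mem_image, Finset.mem_filter] at hx'
      rcases hx' with hx' | ⟨i1, ⟨-, -, hi1ne⟩, hx'⟩
      · exact hne_cast_nat _ i hx'.symm
      · exact hi1ne (natAdd_inj _ _ hx')
    · simp only [R, dif_neg h0, dif_neg h0']
      refine hSdisj _ _ (hpt_mem _) (hpt_mem _) (fun h => ?_)
      have := hpt_inj h
      have h1 := congrArg Fin.val this
      simp at h1
      exact hjj' (Fin.ext (by have := j.isLt; have := j'.isLt; omega))
  · -- sums
    intro j r'
    by_cases h0 : (j : ℕ) = 0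
    · simp only [R, dif_pos h0, Finset.sum_singleton]
      rw [Fin.addCases_right]
      simp [eq_comm]
    · simp only [R, dif_neg h0]
      set p := pt ⟨(j : ℕ) - 1, by have := j.isLt; omega⟩ with hp
      have hpmem : p ∈ (e i : Finset (Fin r)) := hpt_mem _
      rw [Finset.sum_insert (hnotmem p _), Finset.sum_image
        (fun a _ b _ h => natAdd_inj a b h)]
      rw [Fin.addCases_left]
      have hstep : ∀ F : Finset (Fin s),
          (∑ i' ∈ F, Fin.addCases (motive := fun _ => ZMod 2)
            (fun q => if q ∈ (e r' : Finset (Fin r)) then 1 else 0)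
            (fun j' => if j' = r' then 1 else 0) (Fin.natAdd r i')) =
          if r' ∈ F then 1 else 0 := by
        intro F
        have h1 : ∀ i' ∈ F, Fin.addCases (motive := fun _ => ZMod 2)
            (fun q => if q ∈ (e r' : Finset (Fin r)) then 1 else 0)
            (fun j' => if j' = r' then 1 else 0) (Fin.natAdd r i') =
            if i' = r' then 1 else 0 := fun i' _ => by rw [Fin.addCases_right]
        rw [Finset.sum_congr rfl h1, Finset.sum_ite_eq' F r' (fun _ => (1 : ZMod 2))]
      rw [hstep]
      have hmemF : r' ∈ Finset.univ.filter (fun i' : Fin s =>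
          p ∈ (e i' : Finset (Fin r)) ∧ i' ≠ i) ↔ p ∈ (e r' : Finset (Fin r)) ∧ r' ≠ i := by
        simp [Finset.mem_filter]
      rw [if_congr hmemF rfl rfl]
      by_cases h : r' = i
      · subst h
        simp [hpmem]
      · simp only [if_neg h]
        by_cases hpr : p ∈ (e r' : Finset (Fin r))
        · simp [hpr, h]
          decide
        · simp [hpr, h]

/-- If `k ≥ 3` and a Steiner system `S(2, k−1, r)` exists, then
`(k−1)(k−2) ∣ r(r−1)` and `A(r(r−1)/((k−1)(k−2)), k) ≤ r + r(r−1)/((k−1)(k−2))`. -/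
theorem pir_steiner_rows (k r : ℕ) (hk : 3 ≤ k)
    (hex : ∃ B : Finset (Finset (Fin r)), IsSteinerSystem (k - 1) r B) :
    (k - 1) * (k - 2) ∣ r * (r - 1) ∧
    PIRlen (r * (r - 1) / ((k - 1) * (k - 2))) k ≤
      r + r * (r - 1) / ((k - 1) * (k - 2)) := by
  obtain ⟨B, hB⟩ := hex
  have hcount := steiner_count (k - 1) r B hB
  have hsub : k - 1 - 1 = k - 2 := by omega
  rw [hsub] at hcount
  have hpos : 0 < (k - 1) * (k - 2) := Nat.mul_pos (by omega) (by omega)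
  have hdvd : (k - 1) * (k - 2) ∣ r * (r - 1) := ⟨B.card, by rw [← hcount]; ring⟩
  have hq : r * (r - 1) / ((k - 1) * (k - 2)) = B.card :=
    Nat.div_eq_of_eq_mul_left hpos hcount.symm
  refine ⟨hdvd, ?_⟩
  rw [hq]
  obtain ⟨G, hG⟩ := steiner_construction (k - 1) r B hB
  have hk1 : k - 1 + 1 = k := by omega
  rw [hk1] at hG
  exact Nat.sInf_le ⟨G, hG⟩
end

section
/- Let C ⊆ F_2^m be a linear code of dimension s such that for every coordinate i ∈ {1,...,m} there exist J codewords h_1, ..., h_J of the dual code C^⊥ that are orthogonal on coordinate i, i.e., every h_j has a 1 in position i and the supports of any two distinct h_j, h_{j'} intersect exactly in {i}. Then C is a (J+1)-server PIR code; in particular A(s, J+1) ≤ m. -/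
/-!
Put a generator matrix of `C` in systematic form: row `i` has a `1` at a position `p i` where all
other rows vanish. The coordinate functionals restricted to `C` span its dual space, so some `s` of
them form a basis, and the rows are the vectors of the biorthogonal basis of `C`.

A query for row `i` is then answered by `J + 1` disjoint sets of columns: `{p i}` itself, and for
each dual codeword `h` orthogonal on `p i` the rest of its support, since over `𝔽₂` the parity
check `∑ t, h t * c t = 0` says that `c (p i)` is the sum of `c` over `supp h \ {p i}`.
Orthogonality on `p i` makes these sets pairwise disjoint.
-/

open Module Submodule Finset Function

section Systematic

variable {K : Type*} [Field K]

theorem Module.exists_basis_biorthogonal_subfamily {V ι : Type*} [AddCommGroup V] [Module K V]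
    [FiniteDimensional K V] (φ : ι → Dual K V) (hφ : span K (Set.range φ) = ⊤) :
    ∃ (b : Basis (Fin (finrank K V)) K V) (p : Fin (finrank K V) → ι),
      ∀ i j, φ (p j) (b i) = if i = j then 1 else 0 := by
  obtain ⟨κ, a, -, hspan, hli⟩ := exists_linearIndependent' K φ
  let B : Basis κ K (Dual K V) := Basis.mk hli (by rw [hspan, hφ])
  let e : κ ≃ Fin (finrank K V) :=
    B.indexEquiv (Module.finBasisOfFinrankEq K (Dual K V) (Subspace.dual_finrank_eq))
  let B' := B.reindex e
  refine ⟨B'.dualBasis.map (evalEquiv K V).symm, fun j => a (e.symm j), fun i j => ?_⟩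
  have hB' : φ (a (e.symm j)) = B' j := by simp [B', B]
  rw [hB', Basis.map_apply, apply_evalEquiv_symm_apply, Basis.dualBasis_apply_self]
  simp [eq_comm]

theorem Submodule.span_range_proj_comp_subtype_eq_top {ι : Type*} [Finite ι]
    (C : Submodule K (ι → K)) :
    span K (Set.range fun x => LinearMap.proj x ∘ₗ C.subtype) = ⊤ := by
  set W : Submodule K (Dual K C) := span K (Set.range fun x => LinearMap.proj x ∘ₗ C.subtype)
  have hW : W.dualCoannihilator = ⊥ :=
    (Submodule.eq_bot_iff _).mpr fun c hc => Subtype.ext (funext fun x =>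
      (mem_dualCoannihilator c).mp hc _ (subset_span ⟨x, rfl⟩))
  rw [← Subspace.dualCoannihilator_dualAnnihilator_eq (W := W), hW, dualAnnihilator_bot]

theorem Submodule.exists_systematic_generatorMatrix {ι : Type*} [Finite ι] {s : ℕ}
    (C : Submodule K (ι → K)) (hdim : finrank K C = s) :
    ∃ (G : Matrix (Fin s) ι K) (p : Fin s → ι),
      span K (Set.range G) = C ∧ ∀ i j, G i (p j) = if i = j then 1 else 0 := by
  subst hdim
  obtain ⟨b, p, hbp⟩ :=
    exists_basis_biorthogonal_subfamily _ C.span_range_proj_comp_subtype_eq_top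
  refine ⟨fun i => b i, p, ?_, hbp⟩
  rw [show Set.range (fun i => (b i : ι → K)) = C.subtype '' Set.range b from Set.range_comp ..,
    span_image, b.span_eq, map_subtype_top]

end Systematic

section Recovery

variable {ι : Type*} [Fintype ι] [DecidableEq ι]

theorem sum_support_erase_eq_of_dotProduct_eq_zero {h c : ι → ZMod 2} {q : ι}
    (horth : ∑ t, h t * c t = 0) (hq : h q = 1) :
    ∑ t ∈ (univ.filter (h · ≠ 0)).erase q, c t = c q := by
  have hbool : ∀ x : ZMod 2, x ≠ 0 → x = 1 := by decide
  have hsupp : ∑ t ∈ univ.filter (h · ≠ 0), c t = 0 := by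
    refine (sum_filter _ _).trans (Eq.trans (sum_congr rfl fun t _ => ?_) horth)
    split_ifs with ht
    · rw [hbool _ ht, one_mul]
    · rw [not_not.mp ht, zero_mul]
  rw [← sum_erase_add _ _ (mem_filter.mpr ⟨mem_univ q, by simp [hq]⟩)] at hsupp
  rw [eq_neg_of_add_eq_zero_left hsupp, ZMod.neg_eq_self_mod_two]

def recoverySets {J : ℕ} (h : Fin J → ι → ZMod 2) (q : ι) : Fin (J + 1) → Finset ι :=
  Fin.cons {q} fun j => (univ.filter (h j · ≠ 0)).erase q

theorem pairwise_disjoint_recoverySets {J : ℕ} {h : Fin J → ι → ZMod 2} {q : ι}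
    (hdisj : ∀ j j' : Fin J, j ≠ j' → ∀ t, h j t ≠ 0 → h j' t ≠ 0 → t = q) :
    Pairwise (Disjoint on recoverySets h q) := by
  have hq : ∀ j, Disjoint {q} ((univ.filter (h j · ≠ 0)).erase q) := fun j =>
    disjoint_singleton_left.mpr (notMem_erase q _)
  intro j j' hne
  cases j using Fin.cases <;> cases j' using Fin.cases
  · exact absurd rfl hne
  · exact hq _
  · exact (hq _).symm
  case succ.succ k k' =>
    refine disjoint_left.mpr fun t ht ht' => ?_
    simp only [recoverySets, Fin.cons_succ, mem_erase, mem_filter] at ht ht'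
    exact ht.1 (hdisj k k' (ne_of_apply_ne Fin.succ hne) t ht.2.2 ht'.2.2)

theorem sum_recoverySets_eq {J : ℕ} {h : Fin J → ι → ZMod 2} {q : ι} {c : ι → ZMod 2}
    (hdual : ∀ j, ∑ t, h j t * c t = 0) (hone : ∀ j, h j q = 1) (j : Fin (J + 1)) :
    ∑ t ∈ recoverySets h q j, c t = c q := by
  cases j using Fin.cases
  · simp [recoverySets]
  · exact sum_support_erase_eq_of_dotProduct_eq_zero (hdual _) (hone _)

end Recovery

/-- One-step majority-logic decodable codes are PIR codes: if `C ⊆ F_2^m` has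
dimension `s` and for every coordinate `i` there are `J` dual codewords orthogonal
on `i` (each has a `1` at `i`, and supports of distinct ones meet exactly in `{i}`),
then `C` is a `(J+1)`-server PIR code; in particular `A(s, J+1) ≤ m`. -/
theorem pir_one_step_majority (m s J : ℕ)
    (C : Submodule (ZMod 2) (Fin m → ZMod 2))
    (hdim : Module.finrank (ZMod 2) C = s)
    (horth : ∀ i : Fin m, ∃ h : Fin J → (Fin m → ZMod 2),
      (∀ j : Fin J, ∀ c ∈ C, ∑ t, h j t * c t = 0) ∧
      (∀ j : Fin J, h j i = 1) ∧
      (∀ j j' : Fin J, j ≠ j' → ∀ t : Fin m, h j t ≠ 0 → h j' t ≠ 0 → t = i)) :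
    (∃ G : Matrix (Fin s) (Fin m) (ZMod 2),
      Submodule.span (ZMod 2) (Set.range G) = C ∧ hasPropertyA s m (J + 1) G) ∧
    PIRlen s (J + 1) ≤ m := by
  obtain ⟨G, p, hspan, hGp⟩ := C.exists_systematic_generatorMatrix hdim
  have hGC : ∀ r, G r ∈ C := fun r => hspan ▸ subset_span ⟨r, rfl⟩
  have hA : hasPropertyA s m (J + 1) G := fun i => by
    obtain ⟨h, hdual, hone, hdisj⟩ := horth (p i)
    refine ⟨recoverySets h (p i), fun j j' hne => pairwise_disjoint_recoverySets hdisj hne,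
      fun j r => ?_⟩
    rw [sum_recoverySets_eq (fun k => hdual k _ (hGC r)) hone, hGp]
  exact ⟨⟨G, hspan, hA⟩, Nat.sInf_le ⟨G, hA⟩⟩
end

section
/- Let k ≥ 3 and r ≥ 1 be integers and let B(r, k−1, 2k−4) denote the maximum number of codewords in a binary constant-weight code of length r, constant weight k−1, and minimum Hamming distance at least 2k−4. Then A( B(r, k−1, 2k−4), k ) ≤ B(r, k−1, 2k−4) + r. (The systematic matrix [I | M], whose rows are the codewords of an optimal such constant-weight code, generates a k-server PIR code.) -/
/-- `Bconst n w d` = `B(n,w,d)`: the maximum number of vectors in `F_2^n`, all of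
Hamming weight exactly `w`, with pairwise Hamming distance at least `d`. -/
noncomputable def Bconst (n w d : ℕ) : ℕ :=
  sSup {c : ℕ | ∃ S : Finset (Fin n → ZMod 2), S.card = c ∧
    (∀ v ∈ S, hammingNorm v = w) ∧
    ∀ v ∈ S, ∀ u ∈ S, v ≠ u → d ≤ hammingDist v u}

lemma zmod2_ne_imp (p q : ZMod 2) (h : p ≠ q) :
    (p ≠ 0 ∨ q ≠ 0) ∧ ¬(p ≠ 0 ∧ q ≠ 0) := by revert h; revert p q; decide

lemma zmod2_ne_zero (a : ZMod 2) (h : a ≠ 0) : a = 1 := by revert h; revert a; decide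

lemma inter_bound {r w d : ℕ} (x y : Fin r → ZMod 2)
    (hx : hammingNorm x = w) (hy : hammingNorm y = w)
    (hd : d ≤ hammingDist x y) (c c' : Fin r) (hcc : c ≠ c')
    (h1 : x c ≠ 0) (h2 : x c' ≠ 0) (h3 : y c ≠ 0) (h4 : y c' ≠ 0) :
    d + 4 ≤ 2 * w := by
  set A := Finset.univ.filter (fun a => x a ≠ 0) with hA
  set B := Finset.univ.filter (fun a => y a ≠ 0) with hB
  set D := Finset.univ.filter (fun a => x a ≠ y a) with hDdef
  have hAc : A.card = w := hx
  have hBc : B.card = w := hy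
  have hDc : d ≤ D.card := hd
  have hsub : D ⊆ (A ∪ B) \ (A ∩ B) := by
    intro a ha
    simp only [hA, hB, hDdef, Finset.mem_filter, Finset.mem_univ, true_and,
      Finset.mem_sdiff, Finset.mem_union, Finset.mem_inter] at *
    have := zmod2_ne_imp (x a) (y a) ha
    tauto
  have hpair : ({c, c'} : Finset (Fin r)) ⊆ A ∩ B := by
    intro a ha
    simp only [Finset.mem_insert, Finset.mem_singleton] at ha
    rcases ha with rfl | rfl <;>
      simp [hA, hB, h1, h2, h3, h4]
  have h2le : 2 ≤ (A ∩ B).card := by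
    calc 2 = ({c, c'} : Finset (Fin r)).card := (Finset.card_pair hcc).symm
    _ ≤ _ := Finset.card_le_card hpair
  have hcardsd : ((A ∪ B) \ (A ∩ B)).card = (A ∪ B).card - (A ∩ B).card :=
    Finset.card_sdiff_of_subset Finset.inter_subset_union
  have hsum : (A ∪ B).card + (A ∩ B).card = A.card + B.card :=
    Finset.card_union_add_card_inter A B
  have hia : (A ∩ B).card ≤ A.card := Finset.card_le_card Finset.inter_subset_left
  have hle := Finset.card_le_card hsub
  rw [hcardsd] at hle
  omega

/-- Constant-weight-code construction of PIR codes: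
`A(B(r, k−1, 2k−4), k) ≤ B(r, k−1, 2k−4) + r`. -/
theorem pir_constant_weight (k r : ℕ) (hk : 3 ≤ k) (hr : 1 ≤ r) :
    PIRlen (Bconst r (k - 1) (2 * k - 4)) k ≤ Bconst r (k - 1) (2 * k - 4) + r := by
  obtain ⟨k', rfl⟩ : ∃ k', k = k' + 1 := ⟨k - 1, by omega⟩
  have hk' : 2 ≤ k' := by omega
  have hw1 : k' + 1 - 1 = k' := by omega
  set s := Bconst r (k' + 1 - 1) (2 * (k' + 1) - 4) with hs
  -- the supremum is attained
  have hmem : s ∈ {c : ℕ | ∃ S : Finset (Fin r → ZMod 2), S.card = c ∧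
      (∀ v ∈ S, hammingNorm v = (k' + 1 - 1)) ∧
      ∀ v ∈ S, ∀ u ∈ S, v ≠ u → (2 * (k' + 1) - 4) ≤ hammingDist v u} := by
    rw [hs, Bconst]
    apply Nat.sSup_mem
    · exact ⟨0, ∅, by simp⟩
    · exact ⟨Fintype.card (Fin r → ZMod 2),
        fun c ⟨S, hS, _⟩ => hS ▸ S.card_le_univ⟩
  obtain ⟨S, hScard, hSw, hSd⟩ := hmem
  -- enumerate the code
  let e : Fin s ≃ S := (S.equivFin.trans (finCongr hScard)).symm
  let v : Fin s → (Fin r → ZMod 2) := fun i => (e i : Fin r → ZMod 2)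
  have hvmem : ∀ i, v i ∈ S := fun i => (e i).2
  have hvinj : Function.Injective v := fun a b h => e.injective (Subtype.ext h)
  have hw : ∀ i, hammingNorm (v i) = k' := by
    intro i; rw [hSw _ (hvmem i)]; omega
  have hdist : ∀ i t : Fin s, i ≠ t → 2 * k' - 2 ≤ hammingDist (v i) (v t) := by
    intro i t hit
    have := hSd _ (hvmem i) _ (hvmem t) (fun h => hit (hvinj h))
    omega
  -- the matrix [I | M]
  let G' : Matrix (Fin s) (Fin s ⊕ Fin r) (ZMod 2) :=
    fun i => Sum.elim (fun j => if i = j then 1 else 0) (v i)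
  apply Nat.sInf_le
  refine ⟨fun i c => G' i (finSumFinEquiv.symm c), ?_⟩
  intro i
  -- support of row i
  set Ai := Finset.univ.filter (fun c => v i c ≠ 0) with hAidef
  have hAi : Ai.card = k' := hw i
  let σe : Fin k' ≃ Ai := (Ai.equivFin.trans (finCongr hAi)).symm
  let σ : Fin k' → Fin r := fun j => (σe j : Fin r)
  have σinj : Function.Injective σ := fun a b h => σe.injective (Subtype.ext h)
  have σmem : ∀ j, v i (σ j) ≠ 0 := by
    intro j
    have := (σe j).2
    simp only [hAidef, Finset.mem_filter, Finset.mem_univ, true_and] at this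
    exact this
  -- recovery sets
  let F : Fin k' → Finset (Fin s) :=
    fun j => Finset.univ.filter (fun t => t ≠ i ∧ v t (σ j) ≠ 0)
  let R0 : Fin (k' + 1) → Finset (Fin s ⊕ Fin r) :=
    Fin.cons {Sum.inl i}
      (fun j => insert (Sum.inr (σ j)) ((F j).image Sum.inl))
  have hnotmem : ∀ j, Sum.inr (σ j) ∉ (F j).image Sum.inl := by
    intro j h
    obtain ⟨t, _, ht⟩ := Finset.mem_image.mp h
    exact Sum.inl_ne_inr ht
  -- sums
  have hsum0 : ∀ j r', ∑ c ∈ R0 j, G' r' c = if r' = i then 1 else 0 := by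
    intro j r'
    induction j using Fin.cases with
    | zero =>
      simp only [R0, Fin.cons_zero, Finset.sum_singleton, G', Sum.elim_inl]
    | succ j =>
      simp only [R0, Fin.cons_succ]
      rw [Finset.sum_insert (hnotmem j),
        Finset.sum_image (fun a _ b _ h => Sum.inl.inj h)]
      simp only [G', Sum.elim_inr, Sum.elim_inl]
      rw [Finset.sum_ite_eq (F j) r' (fun _ => 1)]
      by_cases hri : r' = i
      · subst hri
        have : r' ∉ F j := by simp [F]
        simp [this, zmod2_ne_zero _ (σmem j)]
      · have hmemF : r' ∈ F j ↔ v r' (σ j) ≠ 0 := by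
          simp [F, hri]
        by_cases hv : v r' (σ j) = 0
        · have : r' ∉ F j := by simp [hmemF, hv]
          simp [this, hv, hri]
        · have hm : r' ∈ F j := hmemF.mpr hv
          rw [zmod2_ne_zero _ hv, if_pos hm, if_neg hri]
          decide
  -- disjointness
  have hdisj0 : ∀ j j' : Fin (k' + 1), j ≠ j' → Disjoint (R0 j) (R0 j') := by
    have key : ∀ j j' : Fin k', j ≠ j' →
        Disjoint (R0 j.succ) (R0 j'.succ) := by
      intro j j' hjj
      rw [Finset.disjoint_left]
      intro a ha ha'
      simp only [R0, Fin.cons_succ, Finset.mem_insert, Finset.mem_image] at ha ha'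
      rcases ha with rfl | ⟨t, htF, hta⟩
      · rcases ha' with h | ⟨t, _, ht⟩
        · exact hjj (σinj (Sum.inr.inj h))
        · exact Sum.inl_ne_inr ht
      · subst hta
        rcases ha' with h | ⟨t', ht'F, ht'⟩
        · exact Sum.inl_ne_inr h
        · obtain rfl : t' = t := Sum.inl.inj ht'
          simp only [F, Finset.mem_filter, Finset.mem_univ, true_and] at htF ht'F
          have hcc : σ j ≠ σ j' := fun h => hjj (σinj h)
          have := inter_bound (v i) (v t') (hw i) (hw t')
            (hdist i t' (fun h => htF.1 h.symm)) (σ j) (σ j') hcc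
            (σmem j) (σmem j') htF.2 ht'F.2
          omega
    have key0 : ∀ j : Fin k', Disjoint (R0 0) (R0 j.succ) := by
      intro j
      rw [Finset.disjoint_left]
      intro a ha ha'
      simp only [R0, Fin.cons_zero, Finset.mem_singleton] at ha
      subst ha
      simp only [R0, Fin.cons_succ, Finset.mem_insert, Finset.mem_image] at ha'
      rcases ha' with h | ⟨t, htF, ht⟩
      · exact Sum.inl_ne_inr h
      · obtain rfl : t = i := Sum.inl.inj ht
        simp [F] at htF
    intro j j' hjj
    induction j using Fin.cases with
    | zero =>
      induction j' using Fin.cases with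
      | zero => exact absurd rfl hjj
      | succ j' => exact key0 j'
    | succ j =>
      induction j' using Fin.cases with
      | zero => exact (key0 j).symm
      | succ j' => exact key j j' (fun h => hjj (congrArg Fin.succ h))
  -- transport along `finSumFinEquiv`
  refine ⟨fun j => (R0 j).map finSumFinEquiv.toEmbedding, ?_, ?_⟩
  · intro j j' h
    exact (Finset.disjoint_map _).mpr (hdisj0 j j' h)
  · intro j r'
    rw [Finset.sum_map]
    simp only [Equiv.coe_toEmbedding, Equiv.symm_apply_apply]
    exact hsum0 j r'
end

section
/- For every integer n ≥ 2, A( n(n−1)/2, 3 ) ≤ n + n(n−1)/2. That is, there is a 3-server PIR code with binomial(n,2) information bits and only n redundancy bits, obtained by taking as parity columns all binomial(n,2) binary vectors of length n and weight 2. -/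
/-- `A(n(n−1)/2, 3) ≤ n + n(n−1)/2`: a 3-server PIR code with `binom(n,2)` information
bits and `n` redundancy bits, taking as parity columns all weight-2 vectors of length `n`. -/
theorem pir_weight_two_parities (n : ℕ) (hn : 2 ≤ n) :
    PIRlen (n * (n - 1) / 2) 3 ≤ n + n * (n - 1) / 2 := by
  set s := n * (n - 1) / 2 with hs
  have hcard : Fintype.card {t : Finset (Fin n) // t.card = 2} = s := by
    rw [Fintype.card_finset_len, Fintype.card_fin, Nat.choose_two_right]
  let e : Fin s ≃ {t : Finset (Fin n) // t.card = 2} :=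
    (Fintype.equivFinOfCardEq hcard).symm
  let f : Fin s → (Fin n ⊕ Fin s) → ZMod 2 := fun r c =>
    Sum.elim (fun a => if a ∈ (e r : Finset (Fin n)) then 1 else 0)
      (fun j => if j = r then 1 else 0) c
  let G : Matrix (Fin s) (Fin (n + s)) (ZMod 2) :=
    fun r c => f r (finSumFinEquiv.symm c)
  apply Nat.sInf_le
  refine ⟨G, ?_⟩
  intro i
  obtain ⟨a, b, hab, hset⟩ := Finset.card_eq_two.mp (e i).2
  have ha_mem : a ∈ (e i : Finset (Fin n)) := by rw [hset]; simp
  have hb_mem : b ∈ (e i : Finset (Fin n)) := by rw [hset]; simp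
  -- key: only the pair i contains both a and b
  have hkey : ∀ j : Fin s, a ∈ (e j : Finset (Fin n)) → b ∈ (e j : Finset (Fin n)) → j = i := by
    intro j haj hbj
    have hsub : ({a, b} : Finset (Fin n)) ⊆ (e j : Finset (Fin n)) := by
      intro x hx
      rcases Finset.mem_insert.mp hx with h | h
      · subst h; exact haj
      · rw [Finset.mem_singleton.mp h]; exact hbj
    have hc2 : ({a, b} : Finset (Fin n)).card = 2 := Finset.card_pair hab
    have heq : (e j : Finset (Fin n)) = ({a, b} : Finset (Fin n)) :=
      (Finset.eq_of_subset_of_card_le hsub (by rw [(e j).2, hc2])).symm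
    have : e j = e i := Subtype.ext (by rw [heq, hset])
    exact e.injective this
  let F : Fin n → Finset (Fin s) := fun x =>
    Finset.univ.filter (fun j : Fin s => x ∈ (e j : Finset (Fin n)) ∧ j ≠ i)
  let R' : Fin 3 → Finset (Fin n ⊕ Fin s) :=
    ![{Sum.inr i},
      insert (Sum.inl a) ((F a).image Sum.inr),
      insert (Sum.inl b) ((F b).image Sum.inr)]
  refine ⟨fun j => (R' j).map finSumFinEquiv.toEmbedding, ?_, ?_⟩
  · intro j j' hjj'
    rw [Finset.disjoint_map]
    have hd0 : ∀ x : Fin n, Disjoint ({Sum.inr i} : Finset (Fin n ⊕ Fin s))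
        (insert (Sum.inl x : Fin n ⊕ Fin s) ((F x).image (Sum.inr : Fin s → Fin n ⊕ Fin s))) := by
      intro x
      rw [Finset.disjoint_left]
      intro c hc
      rw [Finset.mem_singleton.mp hc]
      simp only [Finset.mem_insert, Finset.mem_image, F, Finset.mem_filter]
      rintro (h | ⟨j, ⟨-, -, hji⟩, hj⟩)
      · exact Sum.inr_ne_inl h
      · exact hji (Sum.inr_injective hj)
    have hd12 : Disjoint (insert (Sum.inl a : Fin n ⊕ Fin s) ((F a).image (Sum.inr : Fin s → Fin n ⊕ Fin s)))
        (insert (Sum.inl b : Fin n ⊕ Fin s) ((F b).image Sum.inr)) := by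
      rw [Finset.disjoint_left]
      intro c hc hc'
      simp only [Finset.mem_insert, Finset.mem_image, F, Finset.mem_filter] at hc hc'
      rcases hc with rfl | ⟨p, ⟨-, hap, hpi⟩, rfl⟩
      · rcases hc' with h | ⟨q, -, hq⟩
        · exact hab (Sum.inl_injective h)
        · exact Sum.inr_ne_inl hq
      · rcases hc' with h | ⟨q, ⟨-, hbq, hqi⟩, hq⟩
        · exact Sum.inl_ne_inr h.symm
        · exact hpi (hkey p hap (Sum.inr_injective hq ▸ hbq))
    fin_cases j <;> fin_cases j'
    · exact absurd rfl hjj'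
    · exact hd0 a
    · exact hd0 b
    · exact (hd0 a).symm
    · exact absurd rfl hjj'
    · exact hd12
    · exact (hd0 b).symm
    · exact hd12.symm
    · exact absurd rfl hjj'
  · intro j r
    rw [Finset.sum_map]
    have hG : ∀ c, G r (finSumFinEquiv.toEmbedding c) = f r c := by
      intro c; simp [G]
    simp only [hG]
    have hsum : ∀ x : Fin n, x ∈ (e i : Finset (Fin n)) →
        (∑ c ∈ insert (Sum.inl x : Fin n ⊕ Fin s) ((F x).image (Sum.inr : Fin s → Fin n ⊕ Fin s)), f r c) =
          if r = i then 1 else 0 := by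
      intro x hx
      rw [Finset.sum_insert (by simp)]
      rw [Finset.sum_image (fun p _ q _ h => Sum.inr_injective h)]
      have : (∑ j ∈ F x, f r (Sum.inr j)) = if r ∈ F x then 1 else 0 := by
        simp only [f, Sum.elim_inr]
        rw [Finset.sum_ite_eq' (F x) r (fun _ => (1 : ZMod 2))]
      rw [this]
      simp only [f, Sum.elim_inl, F, Finset.mem_filter, Finset.mem_univ, true_and]
      by_cases hr : r = i
      · subst hr; simp [hx]
      · by_cases hxr : x ∈ (e r : Finset (Fin n)) <;> simp [hxr, hr] <;> decide
    fin_cases j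
    · simp only [R', Matrix.cons_val_zero, Finset.sum_singleton, f, Sum.elim_inr]
      simp [eq_comm]
    · exact hsum a ha_mem
    · exact hsum b hb_mem
end

section
/- For all positive integers s and k, A(s, k) ≤ A(s+1, k) − 1, i.e., A(s,k) + 1 ≤ A(s+1,k). -/
/-- Existence: the `s × (s*k)` matrix of `k` copies of the identity has property `A_k`. -/
lemma exists_hasPropertyA (s k : ℕ) :
    ∃ G : Matrix (Fin s) (Fin (s * k)) (ZMod 2), hasPropertyA s (s * k) k G := by
  refine ⟨fun r c => if (finProdFinEquiv.symm c).1 = r then 1 else 0, fun i => ?_⟩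
  refine ⟨fun j => {finProdFinEquiv (i, j)}, ?_, ?_⟩
  · intro j j' hjj'
    simp only [Finset.disjoint_singleton]
    intro h
    exact hjj' (by simpa using congrArg (fun x => (finProdFinEquiv.symm x).2) h)
  · intro j r
    rw [Finset.sum_singleton]
    simp only [Equiv.symm_apply_apply]
    simp [eq_comm]

/-- Key step: puncturing a code for `s+1` gives a code for `s` of length one less. -/
lemma puncture_step (s n k : ℕ) (hk : 0 < k)
    (G : Matrix (Fin (s + 1)) (Fin (n + 1)) (ZMod 2))
    (hG : hasPropertyA (s + 1) (n + 1) k G) :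
    ∃ G' : Matrix (Fin s) (Fin n) (ZMod 2), hasPropertyA s n k G' := by
  -- find a column `c₀` with a `1` in the last row
  obtain ⟨R₀, -, hR₀⟩ := hG (Fin.last s)
  have hsum : ∑ c ∈ R₀ ⟨0, hk⟩, G (Fin.last s) c = 1 := by
    simpa using hR₀ ⟨0, hk⟩ (Fin.last s)
  have hone : ∀ x : ZMod 2, x ≠ 0 → x = 1 := by decide
  obtain ⟨c₀, -, hc₀⟩ := Finset.exists_ne_zero_of_sum_ne_zero (f := fun c => G (Fin.last s) c)
    (by rw [hsum]; exact one_ne_zero)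
  have hc₀ : G (Fin.last s) c₀ = 1 := hone _ hc₀
  -- the punctured/modified matrix
  refine ⟨fun r c => G r.castSucc (c₀.succAbove c) +
      G (Fin.last s) (c₀.succAbove c) * G r.castSucc c₀, fun i => ?_⟩
  obtain ⟨R, hdisj, hR⟩ := hG i.castSucc
  have hinj : ∀ j : Fin k, Set.InjOn c₀.succAbove (c₀.succAbove ⁻¹' ((R j).erase c₀ : Set (Fin (n+1)))) :=
    fun j => (Fin.succAbove_right_injective (p := c₀)).injOn
  refine ⟨fun j => ((R j).erase c₀).preimage c₀.succAbove (hinj j), ?_, ?_⟩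
  · intro j j' hjj'
    rw [Finset.disjoint_left]
    intro a ha ha'
    rw [Finset.mem_preimage] at ha ha'
    exact (Finset.disjoint_left.mp (hdisj j j' hjj'))
      (Finset.mem_of_mem_erase ha) (Finset.mem_of_mem_erase ha')
  · intro j r
    have hrange : ∀ g : Fin (n+1) → ZMod 2,
        ∑ c ∈ ((R j).erase c₀).preimage c₀.succAbove (hinj j), g (c₀.succAbove c)
          = ∑ x ∈ (R j).erase c₀, g x := by
      intro g
      refine Finset.sum_preimage _ _ _ _ ?_
      intro x hx hxr
      rw [Fin.range_succAbove] at hxr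
      simp only [Set.mem_compl_iff, Set.mem_singleton_iff, not_not] at hxr
      exact absurd (hxr ▸ hx) (Finset.notMem_erase c₀ (R j))
    have key : ∀ r' : Fin (s + 1),
        ∑ x ∈ (R j).erase c₀, G r' x = (if r' = i.castSucc then 1 else 0) +
          G (Fin.last s) c₀ * G r' c₀ * (if c₀ ∈ R j then 1 else 0) := by
      intro r'
      by_cases hmem : c₀ ∈ R j
      · rw [Finset.sum_erase_eq_sub hmem, hR j r', hc₀]
        ring_nf
        rw [sub_eq_add_neg, CharTwo.neg_eq]
        simp [hmem]
      · rw [Finset.erase_eq_of_notMem hmem, hR j r']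
        simp [hmem]
    calc ∑ c ∈ ((R j).erase c₀).preimage c₀.succAbove (hinj j),
          (G r.castSucc (c₀.succAbove c) +
            G (Fin.last s) (c₀.succAbove c) * G r.castSucc c₀)
        = ∑ x ∈ (R j).erase c₀, (G r.castSucc x + G (Fin.last s) x * G r.castSucc c₀) :=
          hrange (fun x => G r.castSucc x + G (Fin.last s) x * G r.castSucc c₀)
      _ = (∑ x ∈ (R j).erase c₀, G r.castSucc x) +
            (∑ x ∈ (R j).erase c₀, G (Fin.last s) x) * G r.castSucc c₀ := by
          rw [Finset.sum_add_distrib, Finset.sum_mul]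
      _ = if r = i then 1 else 0 := by
          rw [key r.castSucc, key (Fin.last s)]
          have hne : (Fin.last s : Fin (s+1)) ≠ i.castSucc := (Fin.castSucc_lt_last i).ne'
          rw [if_neg hne, hc₀]
          simp only [Fin.castSucc_inj, zero_add, one_mul]
          by_cases hmem : c₀ ∈ R j
          · simp only [hmem, if_true, mul_one, one_mul]
            rw [add_assoc, CharTwo.add_self_eq_zero, add_zero]
          · simp [hmem]

/-- `A(s, k) ≤ A(s+1, k) − 1`, i.e. `A(s,k) + 1 ≤ A(s+1,k)`. -/
theorem pir_shorten_s (s k : ℕ) (hs : 0 < s) (hk : 0 < k) :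
    PIRlen s k + 1 ≤ PIRlen (s + 1) k := by
  set S : Set ℕ := {m : ℕ | ∃ G : Matrix (Fin (s+1)) (Fin m) (ZMod 2), hasPropertyA (s+1) m k G}
    with hS
  have hne : S.Nonempty := ⟨(s+1) * k, exists_hasPropertyA (s+1) k⟩
  have hmem : PIRlen (s+1) k ∈ S := Nat.sInf_mem hne
  obtain ⟨G, hG⟩ := id hmem
  -- the minimal length is positive
  have hpos : 0 < PIRlen (s+1) k := by
    rcases Nat.eq_zero_or_pos (PIRlen (s+1) k) with h0 | h
    · exfalso
      obtain ⟨R, -, hR⟩ := hG ⟨0, Nat.succ_pos s⟩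
      have := hR ⟨0, hk⟩ ⟨0, Nat.succ_pos s⟩
      have hempty : R ⟨0, hk⟩ = ∅ := by
        have : IsEmpty (Fin (PIRlen (s+1) k)) := by rw [h0]; exact Fin.isEmpty
        exact Finset.eq_empty_of_isEmpty _
      rw [hempty] at this
      simp at this
    · exact h
  obtain ⟨n, hn⟩ : ∃ n, PIRlen (s+1) k = n + 1 := ⟨PIRlen (s+1) k - 1, by omega⟩
  rw [hn] at hmem
  obtain ⟨G2, hG2⟩ := hmem
  obtain ⟨G', hG'⟩ := puncture_step s n k hk G2 hG2
  have : PIRlen s k ≤ n := Nat.sInf_le ⟨G', hG'⟩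
  omega
end

section
/- If k is an odd positive integer, then for every positive integer s, A(s, k+1) = A(s, k) + 1. (Given a generator matrix of a k-server PIR code with k odd, appending at most one extra column so that all columns sum to zero produces a (k+1)-server PIR code; combined with the puncturing bound A(s,k) ≤ A(s,k+1) − 1 this gives equality.) -/
lemma odd_cast_zmod2 (k : ℕ) (hk : Odd k) : (k : ZMod 2) = 1 := by
  rw [Nat.odd_iff] at hk
  conv_lhs => rw [← Nat.mod_add_div k 2, hk]
  push_cast
  have h2 : (2 : ZMod 2) = 0 := by decide
  rw [h2, zero_mul, add_zero]

lemma prop_pos {s m k : ℕ} (hs : 0 < s) (hk : 0 < k)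
    {G : Matrix (Fin s) (Fin m) (ZMod 2)} (hG : hasPropertyA s m k G) : 0 < m := by
  rcases Nat.eq_zero_or_pos m with hm | hm
  · subst hm
    obtain ⟨R, _, hsum⟩ := hG ⟨0, hs⟩
    have h := hsum ⟨0, hk⟩ ⟨0, hs⟩
    have h0 : R ⟨0, hk⟩ = ∅ := Finset.eq_empty_of_isEmpty _
    rw [h0] at h
    simp at h
  · exact hm

lemma exists_base (s k : ℕ) (hk : 0 < k) :
    ∃ m : ℕ, ∃ G : Matrix (Fin s) (Fin m) (ZMod 2), hasPropertyA s m k G := by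
  classical
  refine ⟨s * k, fun r c => if (c : ℕ) / k = (r : ℕ) then 1 else 0, fun i => ?_⟩
  have hlt : ∀ j : Fin k, (i : ℕ) * k + (j : ℕ) < s * k := by
    intro j
    have h1 : (i : ℕ) + 1 ≤ s := i.isLt
    have h2 : (j : ℕ) < k := j.isLt
    calc (i : ℕ) * k + (j : ℕ) < (i : ℕ) * k + k := by omega
    _ = ((i : ℕ) + 1) * k := by ring
    _ ≤ s * k := Nat.mul_le_mul_right k h1
  refine ⟨fun j => {⟨(i : ℕ) * k + (j : ℕ), hlt j⟩}, ?_, ?_⟩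
  · intro j j' hjj'
    rw [Finset.disjoint_singleton]
    have hne : (j : ℕ) ≠ (j' : ℕ) := fun h => hjj' (Fin.ext h)
    intro h
    have := congrArg Fin.val h
    simp only at this
    omega
  · intro j r
    rw [Finset.sum_singleton]
    have hdiv : ((i : ℕ) * k + (j : ℕ)) / k = (i : ℕ) := by
      rw [Nat.mul_comm, Nat.mul_add_div hk, Nat.div_eq_of_lt j.isLt]
      omega
    simp only [hdiv]
    by_cases h : r = i
    · subst h; simp
    · have : (i : ℕ) ≠ (r : ℕ) := fun hh => h (Fin.ext hh.symm)
      simp [this, h]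

lemma extend {s m k : ℕ} (hk : Odd k) (G : Matrix (Fin s) (Fin m) (ZMod 2))
    (hG : hasPropertyA s m k G) :
    ∃ G' : Matrix (Fin s) (Fin (m + 1)) (ZMod 2), hasPropertyA s (m + 1) (k + 1) G' := by
  classical
  set G' : Matrix (Fin s) (Fin (m + 1)) (ZMod 2) :=
    fun r c => if h : (c : ℕ) < m then G r ⟨c, h⟩ else ∑ c', G r c' with hG'def
  refine ⟨G', fun i => ?_⟩
  obtain ⟨R, hdisj, hsum⟩ := hG i
  have hGcast : ∀ r (c : Fin m), G' r c.castSucc = G r c := by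
    intro r c
    simp only [hG'def]
    rw [dif_pos (show ((c.castSucc : Fin (m+1)) : ℕ) < m from c.isLt)]
    congr 1
  have hGlast : ∀ r, G' r (Fin.last m) = ∑ c', G r c' := by
    intro r; simp [hG'def]
  set emb : Fin m ↪ Fin (m + 1) := ⟨Fin.castSucc, Fin.castSucc_injective m⟩ with hemb
  set U : Finset (Fin (m + 1)) := Finset.univ.biUnion fun j => (R j).map emb with hU
  have hmapsum : ∀ (j : Fin k) (r : Fin s),
      ∑ c ∈ (R j).map emb, G' r c = if r = i then 1 else 0 := by
    intro j r
    rw [Finset.sum_map]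
    simp only [hemb, Function.Embedding.coeFn_mk, hGcast]
    exact hsum j r
  refine ⟨Fin.lastCases (Finset.univ \ U) (fun j => (R j).map emb), ?_, ?_⟩
  · intro j j' hjj'
    induction j using Fin.lastCases with
    | last =>
      induction j' using Fin.lastCases with
      | last => simp at hjj'
      | cast j' =>
        simp only [Fin.lastCases_last, Fin.lastCases_castSucc]
        have hsub : (R j').map emb ⊆ U := by
          rw [hU]
          exact Finset.subset_biUnion_of_mem (fun j => (R j).map emb) (Finset.mem_univ j')
        exact Finset.sdiff_disjoint.mono_right hsub
    | cast j =>
      induction j' using Fin.lastCases with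
      | last =>
        simp only [Fin.lastCases_last, Fin.lastCases_castSucc]
        have hsub : (R j).map emb ⊆ U := by
          rw [hU]
          exact Finset.subset_biUnion_of_mem (fun j => (R j).map emb) (Finset.mem_univ j)
        exact (Finset.sdiff_disjoint.mono_right hsub).symm
      | cast j' =>
        simp only [Fin.lastCases_castSucc]
        rw [Finset.disjoint_map]
        exact hdisj j j' (fun h => hjj' (by rw [h]))
  · intro j r
    induction j using Fin.lastCases with
    | cast j =>
      simp only [Fin.lastCases_castSucc]
      exact hmapsum j r
    | last =>
      simp only [Fin.lastCases_last]
      rw [Finset.sum_sdiff_eq_sub (Finset.subset_univ U)]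
      have htot : ∑ c, G' r c = 0 := by
        rw [Fin.sum_univ_castSucc]
        simp only [hGcast, hGlast]
        exact CharTwo.add_self_eq_zero _
      have hUsum : ∑ c ∈ U, G' r c = if r = i then 1 else 0 := by
        rw [hU, Finset.sum_biUnion]
        · rw [Finset.sum_congr rfl (fun j _ => hmapsum j r), Finset.sum_const,
            Finset.card_univ, Fintype.card_fin, nsmul_eq_mul, odd_cast_zmod2 k hk, one_mul]
        · intro a _ b _ hab
          simp only [Function.onFun, Finset.disjoint_map]
          exact hdisj a b hab
      rw [htot, hUsum]
      by_cases h : r = i <;> simp [h] <;> decide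
      
lemma puncture {s m k : ℕ} (G : Matrix (Fin s) (Fin (m + 1)) (ZMod 2))
    (hG : hasPropertyA s (m + 1) (k + 1) G) :
    ∃ G' : Matrix (Fin s) (Fin m) (ZMod 2), hasPropertyA s m k G' := by
  classical
  refine ⟨fun r c => G r c.castSucc, fun i => ?_⟩
  obtain ⟨R, hdisj, hsum⟩ := hG i
  set T : Finset (Fin (k + 1)) := Finset.univ.filter (fun j => ¬ (Fin.last m ∈ R j)) with hT
  have hTcard : k ≤ T.card := by
    have hcompl : (Finset.univ.filter (fun j : Fin (k + 1) => Fin.last m ∈ R j)).card ≤ 1 := by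
      apply Finset.card_le_one.mpr
      intro a ha b hb
      simp only [Finset.mem_filter] at ha hb
      by_contra hab
      exact (Finset.disjoint_left.mp (hdisj a b hab) ha.2) hb.2
    have hTeq : T.card = Fintype.card (Fin (k + 1)) -
        (Finset.univ.filter (fun j : Fin (k + 1) => Fin.last m ∈ R j)).card := by
      rw [hT, Finset.filter_not, Finset.card_sdiff_of_subset (Finset.filter_subset _ _), Finset.card_univ]
    rw [Fintype.card_fin] at hTeq
    omega
  obtain ⟨t, hts, htcard⟩ := Finset.exists_subset_card_eq hTcard
  set e : Fin k ≃ {x // x ∈ t} := (t.equivFinOfCardEq htcard).symm with he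
  set f : Fin k → Fin (k + 1) := fun j => (e j : Fin (k + 1)) with hf
  have hfinj : Function.Injective f := by
    intro a b hab
    exact e.injective (Subtype.ext hab)
  have hfT : ∀ j, Fin.last m ∉ R (f j) := by
    intro j
    have : f j ∈ T := hts (e j).2
    rw [hT, Finset.mem_filter] at this
    exact this.2
  set R' : Fin k → Finset (Fin m) :=
    fun j => Finset.univ.filter (fun c => c.castSucc ∈ R (f j)) with hR'
  have hmap : ∀ j, (R' j).map ⟨Fin.castSucc, Fin.castSucc_injective m⟩ = R (f j) := by
    intro j
    ext c
    simp only [Finset.mem_map, hR', Finset.mem_filter, Finset.mem_univ, true_and,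
      Function.Embedding.coeFn_mk]
    constructor
    · rintro ⟨a, ha, rfl⟩; exact ha
    · intro hc
      have hne : c ≠ Fin.last m := fun h => hfT j (h ▸ hc)
      refine ⟨c.castPred hne, ?_, Fin.castSucc_castPred c hne⟩
      rw [Fin.castSucc_castPred c hne]
      exact hc
  refine ⟨R', ?_, ?_⟩
  · intro j j' hjj'
    rw [Finset.disjoint_left]
    intro c hc hc'
    rw [hR', Finset.mem_filter] at hc hc'
    exact (Finset.disjoint_left.mp (hdisj (f j) (f j') (fun h => hjj' (hfinj h))) hc.2) hc'.2
  · intro j r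
    have := hsum (f j) r
    rw [← hmap j, Finset.sum_map] at this
    simpa using this

/-- If `k` is odd, then `A(s, k+1) = A(s, k) + 1`. -/
theorem pir_odd_even (s k : ℕ) (hs : 0 < s) (hk : Odd k) :
    PIRlen s (k + 1) = PIRlen s k + 1 := by
  have hkpos : 0 < k := hk.pos
  have hne1 : {m : ℕ | ∃ G : Matrix (Fin s) (Fin m) (ZMod 2), hasPropertyA s m k G}.Nonempty := by
    obtain ⟨m, G, h⟩ := exists_base s k hkpos
    exact ⟨m, G, h⟩
  obtain ⟨G, hG⟩ := Nat.sInf_mem hne1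
  obtain ⟨G', hG'⟩ := extend hk G hG
  have hle : PIRlen s (k + 1) ≤ PIRlen s k + 1 := Nat.sInf_le ⟨G', hG'⟩
  have hne2 : {m : ℕ | ∃ G : Matrix (Fin s) (Fin m) (ZMod 2),
      hasPropertyA s m (k + 1) G}.Nonempty := ⟨_, G', hG'⟩
  have hkey : ∀ b : ℕ, (∃ H : Matrix (Fin s) (Fin b) (ZMod 2), hasPropertyA s b (k + 1) H) →
      PIRlen s k + 1 ≤ b := by
    intro b hb
    obtain ⟨H, hH⟩ := hb
    match b with
    | 0 => exact absurd (prop_pos hs (Nat.succ_pos k) hH) (by omega)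
    | b' + 1 =>
      obtain ⟨H', hH'⟩ := puncture H hH
      have : PIRlen s k ≤ b' := Nat.sInf_le ⟨H', hH'⟩
      omega
  have hge : PIRlen s k + 1 ≤ PIRlen s (k + 1) := hkey _ (Nat.sInf_mem hne2)
  omega
end

section
/- For all positive integers s and k, 2^{s−1} · A(s, k) ≥ (2^s − 1) · k, i.e., A(s,k) ≥ ((2^s − 1)/2^{s−1}) · k. Moreover, equality 2^{s−1} · A(s,k) = (2^s − 1) · k holds if and only if k is divisible by 2^{s−1}. -/
/-!
Double counting: call a pair `(v, c)` of a nonzero `v ∈ F₂ˢ` and a column `c` of `G` *seen* when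
`v ⬝ c = 1`. A nonzero `v` has some `vᵢ = 1`, and each of the `k` disjoint recovery sets of `eᵢ`
sums to a vector whose product with `v` is `1`, so it contains a column seen by `v`: every `v` sees
at least `k` columns. Dually, `v ↦ v + eⱼ` (with `cⱼ = 1`) shows that a column is seen by at most
`2^(s-1)` vectors. Hence `(2^s - 1) k ≤ 2^(s-1) m`.

If equality holds, `2^(s-1)` divides `(2^s - 1) k`, hence `k`. Conversely, for `k = 2^(s-1) t` the
simplex code repeated `t` times attains the bound: its recovery sets for `eᵢ` are the fibres of
"forget coordinate `i`", i.e. the pairs `{w, w + eᵢ}` (and `{eᵢ}` alone, as the zero column is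
absent).
-/

open Finset Matrix

lemma card_filter_ne_zero_fun_zmod_two (ι : Type*) [Fintype ι] [DecidableEq ι] :
    #{v : ι → ZMod 2 | v ≠ 0} = 2 ^ Fintype.card ι - 1 := by
  rw [filter_ne', card_erase_of_mem (mem_univ _)]
  simp

lemma card_dotProduct_ne_zero_le {ι : Type*} [Fintype ι] [DecidableEq ι] (w : ι → ZMod 2) :
    #{v : ι → ZMod 2 | v ⬝ᵥ w ≠ 0} ≤ 2 ^ (Fintype.card ι - 1) := by
  rcases eq_or_ne w 0 with rfl | hw
  · simp
  obtain ⟨i, hi⟩ := Function.ne_iff.mp hw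
  replace hi : w i = 1 := Fin.eq_one_of_ne_zero _ hi
  have shift : ∀ v : ι → ZMod 2, (v + Pi.single i 1) ⬝ᵥ w = v ⬝ᵥ w + 1 := by
    intro v
    simp [add_dotProduct, hi]
  have half : #{v : ι → ZMod 2 | v ⬝ᵥ w ≠ 0} ≤ #{v : ι → ZMod 2 | ¬v ⬝ᵥ w ≠ 0} :=
    card_le_card_of_injOn (· + Pi.single i 1)
      (fun v hv => by
        simp only [coe_filter, mem_univ, true_and, Set.mem_ofPred_eq, not_not, shift] at hv ⊢
        rw [Fin.eq_one_of_ne_zero _ hv]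
        rfl)
      (add_left_injective _).injOn
  have total := card_filter_add_card_filter_not (s := univ) (fun v : ι → ZMod 2 => v ⬝ᵥ w ≠ 0)
  have hι : 0 < Fintype.card ι := Fintype.card_pos_iff.mpr ⟨i⟩
  rw [card_univ, Fintype.card_fun, ZMod.card, ← Nat.two_pow_pred_add_two_pow_pred hι] at total
  omega

lemma le_card_vecMul_ne_zero {s m k : ℕ} {G : Matrix (Fin s) (Fin m) (ZMod 2)}
    (hG : hasPropertyA s m k G) {v : Fin s → ZMod 2} (hv : v ≠ 0) :
    k ≤ #{c | (v ᵥ* G) c ≠ 0} := by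
  obtain ⟨i, hi⟩ := Function.ne_iff.mp hv
  obtain ⟨R, hdisj, hsum⟩ := hG i
  have sum_eq : ∀ j, ∑ c ∈ R j, (v ᵥ* G) c = v i := by
    intro j
    simp only [vecMul, dotProduct]
    rw [sum_comm]
    simp [← mul_sum, hsum]
  simpa using card_le_card_of_forall_subsingleton (fun j c => c ∈ R j) (s := univ)
    (fun j _ => by
      obtain ⟨c, hc, hc0⟩ := exists_ne_zero_of_sum_ne_zero ((sum_eq j).trans_ne hi)
      exact ⟨c, by simpa using hc0, hc⟩)
    (fun c _ j₁ hj₁ j₂ hj₂ => by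
      by_contra hne
      exact disjoint_left.mp (hdisj j₁ j₂ hne) hj₁.2 hj₂.2)

lemma two_pow_sub_one_mul_le_of_hasPropertyA {s m k : ℕ} {G : Matrix (Fin s) (Fin m) (ZMod 2)}
    (hG : hasPropertyA s m k G) : (2 ^ s - 1) * k ≤ 2 ^ (s - 1) * m := by
  have seen_by_column : ∀ c, #{v : Fin s → ZMod 2 | v ≠ 0 ∧ (v ᵥ* G) c ≠ 0} ≤ 2 ^ (s - 1) :=
    fun c => calc
      _ ≤ #{v : Fin s → ZMod 2 | v ⬝ᵥ (fun r => G r c) ≠ 0} :=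
        card_le_card fun v hv => mem_filter.mpr ⟨mem_univ _, (mem_filter.mp hv).2.2⟩
      _ ≤ 2 ^ (s - 1) := by simpa using card_dotProduct_ne_zero_le fun r => G r c
  have := card_mul_le_card_mul (fun v c => (v ᵥ* G) c ≠ 0) (s := {v | v ≠ 0}) (t := univ)
    (fun v hv => le_card_vecMul_ne_zero hG (mem_filter.mp hv).2)
    (fun c _ => by simpa [bipartiteBelow, filter_filter] using seen_by_column c)
  rwa [card_filter_ne_zero_fun_zmod_two, card_univ, Fintype.card_fin, Fintype.card_fin,
    mul_comm m] at this

lemma hasPropertyA_of_fibers {s m k : ℕ} {α : Type*} [Fintype α] (e : α ≃ Fin m)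
    (col : α → Fin s → ZMod 2) {β : Fin s → Type*} [∀ i, Fintype (β i)] [∀ i, DecidableEq (β i)]
    (f : ∀ i, α → β i) (hk : ∀ i, k ≤ Fintype.card (β i))
    (hsum : ∀ i b, ∑ a with f i a = b, col a = Pi.single i 1) :
    hasPropertyA s m k (Matrix.of fun r c => col (e.symm c) r) := by
  intro i
  obtain ⟨g⟩ := Function.Embedding.nonempty_of_card_le (α := Fin k) (β := β i) (by simpa using hk i)
  refine ⟨fun j => ({a | f i a = g j} : Finset α).map e.toEmbedding, fun j j' hne => ?_,
    fun j r => ?_⟩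
  · refine disjoint_map _ |>.mpr (disjoint_filter.mpr fun a _ h h' => hne (g.injective ?_))
    rw [← h, ← h']
  · simp [sum_map, ← Finset.sum_apply, hsum, Pi.single_apply]

lemma sum_fiber_restrict {ι : Type*} [Fintype ι] [DecidableEq ι] (i : ι)
    (u : {j // j ≠ i} → ZMod 2) :
    ∑ v : ι → ZMod 2 with (fun j : {j // j ≠ i} => v j) = u, v = Pi.single i 1 := by
  change ∑ v with (Equiv.funSplitAt i (ZMod 2) v).2 = u, v = _
  rw [sum_filter, ← (Equiv.funSplitAt i (ZMod 2)).symm.sum_comp, Fintype.sum_prod_type]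
  ext r
  by_cases hr : r = i
  · subst hr
    simpa using (by decide : ∑ x : ZMod 2, x = 1)
  · simp [hr, CharTwo.two_eq_zero]

lemma Fintype.sum_subtype_ne_zero {α M : Type*} [Fintype α] [Zero α] [DecidableEq α]
    [AddCommMonoid M] {f : α → M} (hf : f 0 = 0) : ∑ x : {x : α // x ≠ 0}, f x = ∑ x, f x := by
  rw [← sum_subtype {x | x ≠ 0} (by simp) f, sum_filter_of_ne]
  rintro x - hx rfl
  exact hx hf

lemma exists_hasPropertyA_simplex (s t k : ℕ) (hk : k ≤ 2 ^ (s - 1) * t) :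
    ∃ G : Matrix (Fin s) (Fin ((2 ^ s - 1) * t)) (ZMod 2), hasPropertyA s _ k G := by
  have hcard : Fintype.card ({v : Fin s → ZMod 2 // v ≠ 0} × Fin t) = (2 ^ s - 1) * t := by
    simp [Fintype.card_subtype, card_filter_ne_zero_fun_zmod_two]
  -- Recovery sets for `eᵢ` are indexed by a vector on the coordinates other than `i` and a copy.
  refine ⟨_, hasPropertyA_of_fibers (Fintype.equivFinOfCardEq hcard) (fun c => c.1.1)
    (β := fun i => ({j // j ≠ i} → ZMod 2) × Fin t)
    (fun i c => (fun j : {j // j ≠ i} => c.1.1 j, c.2)) (fun i => ?_) (fun i ⟨u, a⟩ => ?_)⟩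
  · simpa using hk
  · rw [sum_filter, Fintype.sum_prod_type]
    simp only [Prod.mk.injEq, ite_and, sum_ite_irrel, sum_const_zero, sum_ite_eq', mem_univ,
      if_true]
    rw [← sum_fiber_restrict i u, sum_filter,
      ← Fintype.sum_subtype_ne_zero (α := Fin s → ZMod 2) (by simp)]

lemma exists_hasPropertyA_PIRlen (s k : ℕ) :
    ∃ G : Matrix (Fin s) (Fin (PIRlen s k)) (ZMod 2), hasPropertyA s _ k G :=
  Nat.sInf_mem (s := {m | ∃ G : Matrix (Fin s) (Fin m) (ZMod 2), hasPropertyA s m k G})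
    ⟨_, exists_hasPropertyA_simplex s k k (Nat.le_mul_of_pos_left _ (by positivity))⟩

lemma PIRlen_le_s15 {s k t : ℕ} (hk : k ≤ 2 ^ (s - 1) * t) : PIRlen s k ≤ (2 ^ s - 1) * t :=
  Nat.sInf_le (exists_hasPropertyA_simplex s t k hk)

lemma Nat.coprime_two_pow_pred_two_pow_sub_one (s : ℕ) : (2 ^ (s - 1)).Coprime (2 ^ s - 1) := by
  rcases s with _ | n
  · simp
  · exact .pow_left _ <| Nat.coprime_two_left.mpr <|
      Nat.Even.sub_odd Nat.one_le_two_pow (by simp [Nat.even_pow]) odd_one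

theorem pir_lower_bound_fixed_s_general (s k : ℕ) :
    (2 ^ s - 1) * k ≤ 2 ^ (s - 1) * PIRlen s k ∧
    (2 ^ (s - 1) * PIRlen s k = (2 ^ s - 1) * k ↔ 2 ^ (s - 1) ∣ k) := by
  obtain ⟨G, hG⟩ := exists_hasPropertyA_PIRlen s k
  have lower := two_pow_sub_one_mul_le_of_hasPropertyA hG
  refine ⟨lower, fun h => ?_, ?_⟩
  · exact (Nat.coprime_two_pow_pred_two_pow_sub_one s).dvd_of_dvd_mul_left ⟨_, h.symm⟩
  · rintro ⟨t, rfl⟩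
    refine le_antisymm ?_ lower
    calc 2 ^ (s - 1) * PIRlen s (2 ^ (s - 1) * t)
        ≤ 2 ^ (s - 1) * ((2 ^ s - 1) * t) := Nat.mul_le_mul_left _ (PIRlen_le_s15 le_rfl)
      _ = (2 ^ s - 1) * (2 ^ (s - 1) * t) := by ring

/-- Lower bound for fixed `s`: `A(s,k) ≥ ((2^s − 1)/2^{s−1})·k`, with equality
iff `2^{s−1}` divides `k`. -/
theorem pir_lower_bound_fixed_s (s k : ℕ) (hs : 0 < s) (hk : 0 < k) :
    (2 ^ s - 1) * k ≤ 2 ^ (s - 1) * PIRlen s k ∧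
    (2 ^ (s - 1) * PIRlen s k = (2 ^ s - 1) * k ↔ 2 ^ (s - 1) ∣ k) :=
  pir_lower_bound_fixed_s_general s k
end

section
/- For every integer t ≥ 2, t divides binomial(t(t+1), t+1), and there exists a k-server PIR array code with m_1 = t rows, s = t(t+1) information bits, m_2 = binomial(t(t+1), t) + binomial(t(t+1), t+1)/t columns, and k = binomial(t(t+1), t). (The construction stores in the first binomial(t(t+1),t) columns all t-element subsets of the s information bits, and in the remaining columns all binomial(t(t+1),t+1) sums of t+1 information bits, t sums per column, with every bit appearing in exactly one sum per column.) -/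
/-- A binary `[m₁ × m₂, s]` `k`-server PIR array code: an injective `F_2`-linear
encoding `E` of `s` bits into `m₁ × m₂` arrays such that for every information
bit `i` there are `k` pairwise disjoint sets of columns, each supporting a linear
functional that recovers `u_i` from the encoding of `u`. -/
def IsPIRArrayCode (m₁ m₂ s k : ℕ)
    (E : (Fin s → ZMod 2) →ₗ[ZMod 2] Matrix (Fin m₁) (Fin m₂) (ZMod 2)) : Prop :=
  Function.Injective E ∧
  ∀ i : Fin s, ∃ R : Fin k → Finset (Fin m₂),
    (∀ j j' : Fin k, j ≠ j' → Disjoint (R j) (R j')) ∧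
    ∀ j : Fin k, ∃ f : Matrix (Fin m₁) (Fin m₂) (ZMod 2) →ₗ[ZMod 2] ZMod 2,
      (∀ M M' : Matrix (Fin m₁) (Fin m₂) (ZMod 2),
        (∀ r : Fin m₁, ∀ c ∈ R j, M r c = M' r c) → f M = f M') ∧
      ∀ u : Fin s → ZMod 2, f (E u) = u i

/-!
The parity columns come from Baranyai's theorem: as `t + 1` divides `s = t(t+1)`, the
`(t+1)`-subsets of the bits split into `binom(s-1, t) = binom(s, t+1)/t` classes, each a
partition of the bits into `t` blocks, and each class becomes a column holding the parities of
its blocks. Bit `i` is read off the systematic column of a `t`-set `A ∌ i` together with the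
parity of the block `A ∪ {i}`; since `i` lies in exactly one block of each class, distinct `A`
use distinct parity columns.

Baranyai's theorem is proved by adding the points one at a time while keeping, in every class,
a partition of the points added so far in which each set occurs as a part exactly as often as it
is the trace of an `r`-set. Extending one part per class preserves this; the parts to extend
are chosen by Hall's theorem, whose condition is a double count of the missing points.
-/

open Finset Function

theorem Nat.mul_choose_eq_mul_choose_sub_one {n r : ℕ} (hr : 0 < r) :
    r * n.choose r = n * (n - 1).choose (r - 1) := by
  obtain ⟨r, rfl⟩ := Nat.exists_eq_add_of_lt hr
  cases n with
  | zero => simp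
  | succ n => simpa [mul_comm] using (Nat.add_one_mul_choose_eq n r).symm

theorem Fin.castAdd_ne_natAdd {m n : ℕ} (i : Fin m) (j : Fin n) : castAdd n i ≠ natAdd m j := by
  simp only [ne_eq, Fin.ext_iff, val_castAdd, val_natAdd]
  omega

section Transversal

variable {ι κ β : Type*} [Fintype ι] [Fintype κ] [DecidableEq β] (B : ι → κ → β) (w δ : β → ℕ)
  {c : ℕ}

/-- Hall's condition for the classes against `δ S` slots per part `S`: the weight identities
turn it into a double count of `∑ w`. -/
theorem card_le_card_biUnion_slots (hc : 0 < c) (hw : ∀ j, ∑ p, w (B j p) = c)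
    (hδ : ∀ j p, #{x : ι × κ | B x.1 x.2 = B j p} * w (B j p) = c * δ (B j p))
    (W : Finset ι) :
    #W ≤ #(W.biUnion fun j => univ.biUnion fun p => {B j p} ×ˢ range (δ (B j p))) := by
  set parts := (W ×ˢ univ).image fun x : ι × κ => B x.1 x.2
  have hcard : #(W.biUnion fun j => univ.biUnion fun p => {B j p} ×ˢ range (δ (B j p))) =
      ∑ S ∈ parts, δ S := by
    rw [show (W.biUnion fun j => univ.biUnion fun p => {B j p} ×ˢ range (δ (B j p))) =
        parts.biUnion fun S => {S} ×ˢ range (δ S) by ext y; simp [parts], card_biUnion]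
    · simp
    · intro S _ S' _ hSS'
      exact disjoint_product.2 (Or.inl (disjoint_singleton.2 hSS'))
  refine Nat.le_of_mul_le_mul_left ?_ hc
  calc c * #W = ∑ x ∈ W ×ˢ univ, w (B x.1 x.2) := by
        simp [sum_product, hw, mul_comm]
    _ = ∑ S ∈ parts, #{x ∈ W ×ˢ univ | B x.1 x.2 = S} • w S := sum_comp _ _
    _ ≤ ∑ S ∈ parts, #{x : ι × κ | B x.1 x.2 = S} * w S := by
        refine sum_le_sum fun S _ => Nat.mul_le_mul_right _ (card_le_card ?_)
        exact filter_subset_filter _ (subset_univ _)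
    _ = ∑ S ∈ parts, c * δ S := by
        refine sum_congr rfl fun S hS => ?_
        obtain ⟨x, -, rfl⟩ := mem_image.1 hS
        exact hδ x.1 x.2
    _ = c * _ := by rw [hcard, mul_sum]

theorem exists_choice_card_le_of_weights (hc : 0 < c) (hw : ∀ j, ∑ p, w (B j p) = c)
    (hδ : ∀ j p, #{x : ι × κ | B x.1 x.2 = B j p} * w (B j p) = c * δ (B j p)) :
    ∃ σ : ι → κ, ∀ S, #{j | B j (σ j) = S} ≤ δ S := by
  obtain ⟨F, hFinj, hFT⟩ := (all_card_le_biUnion_card_iff_exists_injective _).1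
    (card_le_card_biUnion_slots B w δ hc hw hδ)
  have hF : ∀ j, ∃ p, (F j).1 = B j p ∧ (F j).2 < δ (F j).1 := by
    intro j
    obtain ⟨p, -, hp⟩ := mem_biUnion.1 (hFT j)
    obtain ⟨hS, hi⟩ := mem_product.1 hp
    rw [mem_singleton.1 hS]
    exact ⟨p, rfl, mem_range.1 hi⟩
  choose σ hσ using hF
  refine ⟨σ, fun S => ?_⟩
  calc #{j | B j (σ j) = S} ≤ #(range (δ S)) := by
        refine card_le_card_of_injOn (fun j => (F j).2) (fun j hj => ?_) fun j hj j' hj' h => ?_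
        · simp only [coe_filter, Set.mem_ofPred_eq, mem_univ, true_and] at hj
          simpa [← hj, ← (hσ j).1] using (hσ j).2
        · simp only [coe_filter, Set.mem_ofPred_eq, mem_univ, true_and] at hj hj'
          exact hFinj (Prod.ext (by rw [(hσ j).1, (hσ j').1, hj, hj']) h)
    _ = δ S := card_range _

end Transversal

namespace Baranyai

/-- The number of `r`-subsets of an `n`-set that meet a given `m`-subset `D` in a given
`k`-subset of `D`. -/
def extensionCount (n r m k : ℕ) : ℕ := if k ≤ r then (n - m).choose (r - k) else 0

section ExtensionCount

variable {n r m k : ℕ}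

theorem extensionCount_eq_add (hm : m < n) :
    extensionCount n r m k =
      extensionCount n r (m + 1) k + extensionCount n r (m + 1) (k + 1) := by
  unfold extensionCount
  obtain ⟨u, hu⟩ : ∃ u, n - m = u + 1 := ⟨n - m - 1, by omega⟩
  rw [hu, show n - (m + 1) = u by omega]
  rcases lt_trichotomy k r with hkr | rfl | hkr
  · obtain ⟨v, hv⟩ : ∃ v, r - k = v + 1 := ⟨r - k - 1, by omega⟩
    rw [if_pos hkr.le, if_pos hkr.le, if_pos (show k + 1 ≤ r from hkr), hv,
      show r - (k + 1) = v by omega, Nat.choose_succ_succ', add_comm]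
  · simp
  · simp [hkr.not_ge, show ¬ k + 1 ≤ r by omega]

theorem sub_mul_extensionCount :
    (r - k) * extensionCount n r m k = (n - m) * extensionCount n r (m + 1) (k + 1) := by
  unfold extensionCount
  by_cases hkr : k < r
  · rw [if_pos hkr.le, if_pos (show k + 1 ≤ r from hkr),
      Nat.mul_choose_eq_mul_choose_sub_one (by omega)]
    congr 2
  · rw [if_neg (by omega : ¬ k + 1 ≤ r), Nat.sub_eq_zero_of_le (by omega)]
    simp

theorem extensionCount_self : extensionCount n r n k = if k = r then 1 else 0 := by
  unfold extensionCount
  rcases lt_trichotomy k r with hkr | rfl | hkr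
  · simp [hkr.le, hkr.ne, Nat.choose_eq_zero_of_lt (Nat.sub_pos_of_lt hkr)]
  · simp
  · simp [hkr.not_ge, hkr.ne']

/-- Vandermonde's identity: classify the `(r - 1)`-subsets of an `(n - 1)`-set by their trace
on `D`. -/
theorem sum_powerset_extensionCount {α : Type*} (D : Finset α) (hr : 0 < r) (hD : #D < n) :
    ∑ S ∈ D.powerset, extensionCount n r (#D + 1) (#S + 1) = (n - 1).choose (r - 1) := by
  set m := #D
  set f : ℕ → ℕ := fun k => m.choose k * extensionCount n r (m + 1) (k + 1)
  have hsum : ∑ S ∈ D.powerset, extensionCount n r (m + 1) (#S + 1) =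
      ∑ k ∈ range (m + r), f k := by
    rw [sum_powerset_apply_card (fun k => extensionCount n r (m + 1) (k + 1))]
    refine sum_subset (range_subset_range.2 (by omega)) fun k _ hk => ?_
    rw [Nat.choose_eq_zero_of_lt (by simpa using hk : m < k), zero_smul]
  have hvandermonde : (n - 1).choose (r - 1) = ∑ k ∈ range (m + r), f k := by
    rw [show n - 1 = m + (n - (m + 1)) by omega, Nat.add_choose_eq,
      Nat.sum_antidiagonal_eq_sum_range_succ_mk, show (r - 1).succ = r by omega]
    refine sum_subset_zero_on_sdiff (range_subset_range.2 (by omega)) (fun k hk => ?_)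
      fun k hk => ?_
    · simp only [mem_sdiff, mem_range] at hk
      simp only [f, extensionCount, if_neg (show ¬ k + 1 ≤ r by omega), mul_zero]
    · simp only [mem_range] at hk
      simp only [f, extensionCount, if_pos (show k + 1 ≤ r by omega),
        show r - (k + 1) = r - 1 - k by omega]
  rw [hsum, hvandermonde]

end ExtensionCount

section Families

variable {ι κ α : Type*} [DecidableEq κ] [DecidableEq α]

def insertChosen (B : ι → κ → Finset α) (σ : ι → κ) (a : α) : ι → κ → Finset α :=
  fun j p => if p = σ j then insert a (B j p) else B j p

theorem mem_insertChosen {B : ι → κ → Finset α} {σ : ι → κ} {a x : α} {j : ι} {p : κ} :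
    x ∈ insertChosen B σ a j p ↔ x = a ∧ p = σ j ∨ x ∈ B j p := by
  unfold insertChosen
  split_ifs with h <;> simp [h]

variable [Fintype ι] [Fintype κ]

def partCount (B : ι → κ → Finset α) (S : Finset α) : ℕ := #{x : ι × κ | B x.1 x.2 = S}

variable {B : ι → κ → Finset α} {σ : ι → κ} {a : α} {S : Finset α}

omit [DecidableEq α] in
theorem card_filter_graph (P : ι → Prop) [DecidablePred P] :
    #{x : ι × κ | x.2 = σ x.1 ∧ P x.1} = #{j | P j} := by
  rw [← card_map ⟨fun j => (j, σ j), fun j j' h => congrArg Prod.fst h⟩]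
  congr 1
  ext ⟨j, p⟩
  simp only [mem_filter, mem_univ, true_and, mem_map, Prod.ext_iff]
  exact ⟨fun ⟨hp, hj⟩ => ⟨j, hj, rfl, hp.symm⟩, fun ⟨_, hj, rfl, hp⟩ => ⟨hp.symm, hj⟩⟩

theorem partCount_insertChosen_of_mem (hB : ∀ j p, a ∉ B j p) (haS : a ∈ S) :
    partCount (insertChosen B σ a) S = #{j | B j (σ j) = S.erase a} := by
  rw [partCount, ← card_filter_graph (σ := σ)]
  congr 1
  ext ⟨j, p⟩
  simp only [mem_filter, mem_univ, true_and]
  unfold insertChosen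
  split_ifs with hp
  · subst hp
    exact ⟨fun h => ⟨rfl, h ▸ (erase_insert (hB j _)).symm⟩, fun h => h.2 ▸ insert_erase haS⟩
  · exact ⟨fun h => absurd (h ▸ haS) (hB j p), fun h => absurd h.1 hp⟩

theorem partCount_insertChosen_add_of_notMem (haS : a ∉ S) :
    partCount (insertChosen B σ a) S + #{j | B j (σ j) = S} = partCount B S := by
  rw [partCount, partCount, ← card_filter_graph (σ := σ), add_comm,
    ← card_filter_add_card_filter_not (s := {x : ι × κ | B x.1 x.2 = S}) (fun x => x.2 = σ x.1),
    filter_filter, filter_filter]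
  congr 2
  · ext ⟨j, p⟩
    simp only [mem_filter, mem_univ, true_and]
    constructor
    · rintro ⟨rfl, h⟩; exact ⟨h, rfl⟩
    · rintro ⟨h, rfl⟩; exact ⟨rfl, h⟩
  · ext ⟨j, p⟩
    simp only [mem_filter, mem_univ, true_and]
    unfold insertChosen
    split_ifs with hp
    · exact ⟨fun h => absurd (h ▸ mem_insert_self a _) haS, fun h => absurd hp h.2⟩
    · exact ⟨fun h => ⟨h, hp⟩, fun h => h.1⟩

end Families

section PartialResolution

variable {ι κ : Type*} [Fintype ι] [Fintype κ] {n r : ℕ}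

/-- The trace on `D` of a resolution of the `r`-subsets of `Fin n`: every class `B j` partitions
`D` into `|κ|` possibly empty parts, and every `S ⊆ D` is a part exactly as often as it is the
trace on `D` of an `r`-subset. -/
structure IsPartialResolution (n r : ℕ) (D : Finset (Fin n)) (B : ι → κ → Finset (Fin n)) :
    Prop where
  subset : ∀ j p, B j p ⊆ D
  existsUnique_mem : ∀ j, ∀ x ∈ D, ∃! p, x ∈ B j p
  partCount_eq : ∀ S ⊆ D, partCount B S = extensionCount n r #D #S

theorem isPartialResolution_empty (hr : 0 < r) (hκ : Fintype.card κ * r = n)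
    (hι : Fintype.card ι = (n - 1).choose (r - 1)) :
    IsPartialResolution n r (∅ : Finset (Fin n)) fun (_ : ι) (_ : κ) => ∅ := by
  refine ⟨fun _ _ => subset_rfl, fun _ x hx => absurd hx (notMem_empty x), fun S hS => ?_⟩
  rw [subset_empty.1 hS, partCount, filter_true_of_mem fun _ _ => rfl, card_univ,
    Fintype.card_prod, card_empty, extensionCount, if_pos (Nat.zero_le r), Nat.sub_zero,
    Nat.sub_zero, hι]
  refine Nat.eq_of_mul_eq_mul_left hr ?_
  rw [Nat.mul_choose_eq_mul_choose_sub_one hr, ← hκ]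
  ring

namespace IsPartialResolution

variable {D : Finset (Fin n)} {B : ι → κ → Finset (Fin n)}

theorem card_le (h : IsPartialResolution n r D B) (j : ι) (p : κ) : #(B j p) ≤ r := by
  have hpos : 0 < partCount B (B j p) := card_pos.2 ⟨(j, p), by simp⟩
  rw [h.partCount_eq _ (h.subset j p), extensionCount] at hpos
  split_ifs at hpos with hle
  · exact hle
  · exact absurd hpos (lt_irrefl 0)

theorem sum_card (h : IsPartialResolution n r D B) (j : ι) : ∑ p, #(B j p) = #D := by
  calc ∑ p, #(B j p) = ∑ p, ∑ x ∈ D, if x ∈ B j p then 1 else 0 := by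
        refine sum_congr rfl fun p _ => ?_
        rw [← card_filter, filter_mem_eq_inter, inter_eq_right.2 (h.subset j p)]
    _ = ∑ x ∈ D, #{p | x ∈ B j p} := by
        rw [sum_comm]
        exact sum_congr rfl fun x _ => (card_filter _ _).symm
    _ = #D := by
        rw [card_eq_sum_ones D]
        exact sum_congr rfl fun x hx =>
          (Fintype.existsUnique_iff_card_one _).1 (h.existsUnique_mem j x hx)

theorem sum_sub_card (h : IsPartialResolution n r D B) (hκ : Fintype.card κ * r = n) (j : ι) :
    ∑ p, (r - #(B j p)) = n - #D := by
  have hsum : ∑ p, (r - #(B j p)) + ∑ p, #(B j p) = n := by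
    rw [← sum_add_distrib, sum_congr rfl fun p _ => Nat.sub_add_cancel (h.card_le j p),
      sum_const, card_univ, smul_eq_mul, hκ]
  rw [h.sum_card] at hsum
  omega

theorem insertChosen [DecidableEq κ] {σ : ι → κ} {a : Fin n} (h : IsPartialResolution n r D B)
    (ha : a ∉ D)
    (hσ : ∀ S ⊆ D, #{j | B j (σ j) = S} = extensionCount n r (#D + 1) (#S + 1)) :
    IsPartialResolution n r (insert a D) (insertChosen B σ a) := by
  have haB : ∀ j p, a ∉ B j p := fun j p haB => ha (h.subset j p haB)
  refine ⟨fun j p x hx => ?_, fun j x hx => ?_, fun S hS => ?_⟩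
  · rcases mem_insertChosen.1 hx with ⟨rfl, -⟩ | hx
    · exact mem_insert_self x D
    · exact mem_insert_of_mem (h.subset j p hx)
  · simp only [mem_insertChosen]
    rcases mem_insert.1 hx with rfl | hx
    · exact ⟨σ j, Or.inl ⟨rfl, rfl⟩, fun p hp => hp.elim And.right fun hp => absurd hp (haB j p)⟩
    · have hxa : x ≠ a := fun hxa => ha (hxa ▸ hx)
      simpa [hxa] using h.existsUnique_mem j x hx
  rw [card_insert_of_notMem ha]
  by_cases haS : a ∈ S
  · have hS' : S.erase a ⊆ D := fun x hx => by
      obtain ⟨hxa, hxS⟩ := mem_erase.1 hx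
      exact (mem_insert.1 (hS hxS)).resolve_left hxa
    rw [partCount_insertChosen_of_mem haB haS, hσ _ hS', card_erase_add_one haS]
  · have hS' : S ⊆ D := fun x hx =>
      (mem_insert.1 (hS hx)).resolve_left (ne_of_mem_of_not_mem hx haS)
    have hcount := partCount_insertChosen_add_of_notMem (B := B) (σ := σ) haS
    rw [h.partCount_eq S hS', hσ S hS',
      extensionCount_eq_add ((card_lt_univ_of_notMem ha).trans_eq (Fintype.card_fin n))] at hcount
    omega

theorem exists_insert (hr : 0 < r) (hκ : Fintype.card κ * r = n)
    (hι : Fintype.card ι = (n - 1).choose (r - 1)) (h : IsPartialResolution n r D B) {a : Fin n}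
    (ha : a ∉ D) : ∃ B' : ι → κ → Finset (Fin n), IsPartialResolution n r (insert a D) B' := by
  classical
  have hD : #D < n := (card_lt_univ_of_notMem ha).trans_eq (Fintype.card_fin n)
  set δ : Finset (Fin n) → ℕ := fun S => extensionCount n r (#D + 1) (#S + 1)
  obtain ⟨σ, hσ⟩ := exists_choice_card_le_of_weights B (fun S => r - #S) δ (Nat.sub_pos_of_lt hD)
    (h.sum_sub_card hκ) fun j p => by
      rw [← partCount, h.partCount_eq _ (h.subset j p), mul_comm]
      exact sub_mul_extensionCount
  have hchosen : ∑ S ∈ D.powerset, #{j | B j (σ j) = S} = ∑ S ∈ D.powerset, δ S := by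
    rw [sum_powerset_extensionCount D hr hD, ← hι, ← card_univ,
      card_eq_sum_card_fiberwise fun j _ => mem_powerset.2 (h.subset j (σ j))]
  exact ⟨_, h.insertChosen (σ := σ) ha fun S hS =>
    (sum_eq_sum_iff_of_le fun S _ => hσ S).1 hchosen S (mem_powerset.2 hS)⟩

end IsPartialResolution

end PartialResolution

theorem exists_resolution {ι κ : Type*} [Fintype ι] [Fintype κ] {n r : ℕ} (hr : 0 < r)
    (hκ : Fintype.card κ * r = n) (hι : Fintype.card ι = (n - 1).choose (r - 1)) :
    ∃ B : ι → κ → Finset (Fin n), (∀ j p, #(B j p) = r) ∧ (∀ j x, ∃! p, x ∈ B j p) ∧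
      ∀ S : Finset (Fin n), #S = r → ∃! x : ι × κ, B x.1 x.2 = S := by
  classical
  have hpartial : ∀ D : Finset (Fin n), ∃ B : ι → κ → Finset (Fin n),
      IsPartialResolution n r D B := by
    intro D
    induction D using Finset.induction_on with
    | empty => exact ⟨_, isPartialResolution_empty hr hκ hι⟩
    | insert a D ha ih =>
      obtain ⟨B, hB⟩ := ih
      exact hB.exists_insert hr hκ hι ha
  obtain ⟨B, hB⟩ := hpartial univ
  have hcount : ∀ S, partCount B S = if #S = r then 1 else 0 := fun S => by
    rw [hB.partCount_eq S (subset_univ S), card_univ, Fintype.card_fin, extensionCount_self]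
  refine ⟨B, fun j p => ?_, fun j x => hB.existsUnique_mem j x (mem_univ x), fun S hS => ?_⟩
  · have hpos : 0 < partCount B (B j p) := card_pos.2 ⟨(j, p), by simp⟩
    rw [hcount] at hpos
    by_contra hne
    simp [hne] at hpos
  · rw [Fintype.existsUnique_iff_card_one]
    exact (hcount S).trans (if_pos hS)

end Baranyai

section Encoding

variable {R : Type*} [CommSemiring R]

def supportEncoding {α m n : Type*} (g : m → n → Finset α) : (α → R) →ₗ[R] Matrix m n R where
  toFun u := Matrix.of fun p c => ∑ x ∈ g p c, u x
  map_add' u v := by ext; simp [sum_add_distrib]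
  map_smul' a u := by ext; simp [mul_sum]

@[simp]
theorem supportEncoding_apply {α m n : Type*} (g : m → n → Finset α) (u : α → R) (p : m)
    (c : n) : supportEncoding g u p c = ∑ x ∈ g p c, u x := rfl

theorem exists_local_functional {α m n : Type*} (E : (α → R) →ₗ[R] Matrix m n R) (i : α)
    {C : Finset n} (P : Finset (m × n)) (hP : ∀ q ∈ P, q.2 ∈ C)
    (hsum : ∀ u, ∑ q ∈ P, E u q.1 q.2 = u i) :
    ∃ f : Matrix m n R →ₗ[R] R,
      (∀ M M' : Matrix m n R, (∀ r, ∀ c ∈ C, M r c = M' r c) → f M = f M') ∧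
        ∀ u, f (E u) = u i :=
  ⟨∑ q ∈ P, Matrix.entryLinearMap R R q.1 q.2,
    fun M M' h => by simpa using sum_congr rfl fun q hq => h q.1 q.2 (hP q hq),
    fun u => by simpa using hsum u⟩

end Encoding

theorem eq_of_parts_eq_insert {ι κ α : Type*} [DecidableEq α] {B : ι → κ → Finset α}
    (hB : ∀ j, Pairwise (Disjoint on B j)) {i : α} {A A' : Finset α} (hA : i ∉ A) (hA' : i ∉ A')
    {j : ι} {p p' : κ} (h : B j p = insert i A) (h' : B j p' = insert i A') : A = A' := by
  have hpp' : p = p' := by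
    by_contra hne
    exact disjoint_left.1 (hB j hne) (h ▸ mem_insert_self i A) (h' ▸ mem_insert_self i A')
  rw [← erase_insert hA, ← erase_insert hA', ← h, ← h', hpp']

section ResolutionCode

variable {s t K : ℕ}

noncomputable def enumSubsets (s t : ℕ) : Fin (s.choose t) ≃ {A : Finset (Fin s) // #A = t} :=
  (Fintype.equivFinOfCardEq (by rw [Fintype.card_finset_len, Fintype.card_fin])).symm

/-- Column `a < binom(s, t)` lists the `a`-th `t`-subset of the bits in increasing order;
column `binom(s, t) + j` holds the parities of the blocks of class `j`. -/
noncomputable def resolutionEncoding (B : Fin K → Fin t → Finset (Fin s)) :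
    (Fin s → ZMod 2) →ₗ[ZMod 2] Matrix (Fin t) (Fin (s.choose t + K)) (ZMod 2) :=
  supportEncoding fun p => Fin.addCases
    (fun a => {(enumSubsets s t a).1.orderEmbOfFin (enumSubsets s t a).2 p}) fun j => B j p

variable (B : Fin K → Fin t → Finset (Fin s)) (u : Fin s → ZMod 2)

theorem resolutionEncoding_natAdd (p : Fin t) (j : Fin K) :
    resolutionEncoding B u p (Fin.natAdd _ j) = ∑ x ∈ B j p, u x := by
  simp [resolutionEncoding]

theorem sum_resolutionEncoding_castAdd (a : Fin (s.choose t)) :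
    ∑ p, resolutionEncoding B u p (Fin.castAdd K a) = ∑ x ∈ (enumSubsets s t a).1, u x := by
  simp only [resolutionEncoding, supportEncoding_apply, Fin.addCases_left, sum_singleton]
  conv_rhs => rw [← map_orderEmbOfFin_univ _ (enumSubsets s t a).2, sum_map]
  rfl

theorem exists_resolutionEncoding_castAdd_eq {a : Fin (s.choose t)} {i : Fin s}
    (hi : i ∈ (enumSubsets s t a).1) :
    ∃ p, ∀ u, resolutionEncoding B u p (Fin.castAdd K a) = u i := by
  rw [← mem_coe, ← range_orderEmbOfFin _ (enumSubsets s t a).2] at hi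
  obtain ⟨p, rfl⟩ := hi
  exact ⟨p, fun u => by simp [resolutionEncoding]⟩

theorem resolutionEncoding_injective (ht : 0 < t) (hts : t ≤ s) :
    Injective (resolutionEncoding B) := fun u v huv => funext fun i => by
  obtain ⟨A, hiA, hA⟩ := exists_superset_card_eq (s := {i}) (n := t) (by simpa) (by simpa)
  obtain ⟨p, hp⟩ := exists_resolutionEncoding_castAdd_eq B (a := (enumSubsets s t).symm ⟨A, hA⟩)
    (by simpa using hiA)
  rw [← hp u, ← hp v, huv]

theorem isPIRArrayCode_resolutionEncoding (ht : 0 < t) (hts : t ≤ s)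
    (hcover : ∀ S : Finset (Fin s), #S = t + 1 → ∃ j p, B j p = S)
    (hdisj : ∀ j, Pairwise (Disjoint on B j)) :
    IsPIRArrayCode t (s.choose t + K) s (s.choose t) (resolutionEncoding B) := by
  classical
  refine ⟨resolutionEncoding_injective B ht hts, fun i => ?_⟩
  set e := enumSubsets s t
  have hext : ∀ a, i ∉ (e a).1 → ∃ j p, B j p = insert i (e a).1 := fun a hi =>
    hcover _ (by rw [card_insert_of_notMem hi, (e a).2])
  choose cls blk hblk using hext
  let R : Fin (s.choose t) → Finset (Fin (s.choose t + K)) := fun a =>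
    if h : i ∈ (e a).1 then {Fin.castAdd K a} else {Fin.castAdd K a, Fin.natAdd _ (cls a h)}
  have hR : ∀ a c, c ∈ R a ↔ c = Fin.castAdd K a ∨ ∃ h, c = Fin.natAdd _ (cls a h) := by
    intro a c
    by_cases h : i ∈ (e a).1 <;> simp [R, h]
  refine ⟨R, fun a a' hne => disjoint_left.2 fun c hc hc' => hne ?_, fun a => ?_⟩
  · rcases (hR a c).1 hc with rfl | ⟨h, rfl⟩ <;> rcases (hR a' _).1 hc' with hc' | ⟨h', hc'⟩
    · exact Fin.castAdd_inj.1 hc'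
    · exact absurd hc' (Fin.castAdd_ne_natAdd _ _)
    · exact absurd hc'.symm (Fin.castAdd_ne_natAdd _ _)
    · exact e.injective <| Subtype.ext <| eq_of_parts_eq_insert hdisj h h' (hblk a h)
        ((Fin.natAdd_inj _).1 hc' ▸ hblk a' h')
  by_cases h : i ∈ (e a).1
  · obtain ⟨p, hp⟩ := exists_resolutionEncoding_castAdd_eq B h
    refine exists_local_functional _ i {(p, Fin.castAdd K a)} (by simp [hR, h]) fun u => ?_
    rw [sum_singleton, hp]
  · refine exists_local_functional _ i
      (insert (blk a h, Fin.natAdd _ (cls a h)) (univ.image fun p => (p, Fin.castAdd K a)))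
      (by simp [hR, h]) fun u => ?_
    rw [sum_insert (by simpa using Fin.castAdd_ne_natAdd a (cls a h)),
      sum_image fun p _ p' _ hpp' => congrArg Prod.fst hpp', resolutionEncoding_natAdd, hblk,
      sum_resolutionEncoding_castAdd, sum_insert h, add_assoc, CharTwo.add_self_eq_zero, add_zero]

end ResolutionCode

/-- For every `t ≥ 2`, `t` divides `binom(t(t+1), t+1)`, and there is a `k`-server
PIR array code with `m₁ = t` rows, `s = t(t+1)` information bits,
`m₂ = binom(t(t+1), t) + binom(t(t+1), t+1)/t` columns, and `k = binom(t(t+1), t)`. -/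
theorem pir_array_code_construction (t : ℕ) (ht : 2 ≤ t) :
    t ∣ (t * (t + 1)).choose (t + 1) ∧
    ∃ E : (Fin (t * (t + 1)) → ZMod 2) →ₗ[ZMod 2]
        Matrix (Fin t) (Fin ((t * (t + 1)).choose t + (t * (t + 1)).choose (t + 1) / t))
          (ZMod 2),
      IsPIRArrayCode t ((t * (t + 1)).choose t + (t * (t + 1)).choose (t + 1) / t)
        (t * (t + 1)) ((t * (t + 1)).choose t) E := by
  have hchoose : (t * (t + 1)).choose (t + 1) = t * (t * (t + 1) - 1).choose t := by
    have ht1 : 0 < t + 1 := by omega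
    refine Nat.eq_of_mul_eq_mul_left ht1 ?_
    rw [Nat.mul_choose_eq_mul_choose_sub_one ht1, Nat.add_sub_cancel]
    ring
  refine ⟨⟨_, hchoose⟩, ?_⟩
  rw [hchoose, Nat.mul_div_cancel_left _ (by omega)]
  obtain ⟨B, -, hpartition, hresolution⟩ :=
    Baranyai.exists_resolution (ι := Fin ((t * (t + 1) - 1).choose t)) (κ := Fin t)
      (n := t * (t + 1)) (r := t + 1) (by omega) (by rw [Fintype.card_fin]) (by simp)
  refine ⟨_, isPIRArrayCode_resolutionEncoding B (by omega)
    (Nat.le_mul_of_pos_right t (by omega)) (fun S hS => ?_) fun j p p' hpp' =>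
      disjoint_left.2 fun x hx hx' => hpp' ((hpartition j x).unique hx hx')⟩
  obtain ⟨⟨j, p⟩, hjp, -⟩ := hresolution S hS
  exact ⟨j, p, hjp⟩
end
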